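/- arXiv:1807.06495 — 8 statements merged into one kernel-verified Lean document; each statement's English description precedes it below -/
import Mathlib

section
/- Any two eventually periodic subsets of ℕ are comparable in the germ order: if S and S' are eventually periodic, then S ⪯ S' or S' ⪯ S. -/
/-- The generating function of a set of naturals. -/
noncomputable def genFun (S : Set ℕ) (q : ℝ) : ℝ := ∑' n : S, q ^ (n : ℕ)

/-- The germ order: `S' ⪯ S` iff `S'_q ≤ S_q` for all `q` near `1⁻`. -/
def germLE (S' S : Set ℕ) : Prop :=
  ∃ ε > (0 : ℝ), ∀ q : ℝ, 1 - ε < q → q < 1 → genFun S' q ≤ genFun S q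

/-- `S ⊆ ℕ` is eventually periodic if for some `N` and `d ≥ 1`,
`n ∈ S ↔ n + d ∈ S` for all `n ≥ N`. -/
def EventuallyPeriodic (S : Set ℕ) : Prop :=
  ∃ (N d : ℕ), 1 ≤ d ∧ ∀ n ≥ N, (n ∈ S ↔ n + d ∈ S)

/-- Characteristic function of a set of naturals. -/
noncomputable def chi (S : Set ℕ) (n : ℕ) : ℝ := S.indicator (fun _ => 1) n

lemma chi_nonneg (S : Set ℕ) (n : ℕ) : 0 ≤ chi S n := by
  unfold chi; classical
  rw [Set.indicator_apply]; split <;> norm_num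

lemma chi_le_one (S : Set ℕ) (n : ℕ) : chi S n ≤ 1 := by
  unfold chi; classical
  rw [Set.indicator_apply]; split <;> norm_num

lemma chi_congr {S : Set ℕ} {m n : ℕ} (h : m ∈ S ↔ n ∈ S) : chi S m = chi S n := by
  unfold chi; classical
  rw [Set.indicator_apply, Set.indicator_apply]
  by_cases hm : m ∈ S
  · rw [if_pos hm, if_pos (h.mp hm)]
  · rw [if_neg hm, if_neg (fun hn => hm (h.mpr hn))]

lemma summable_chi (S : Set ℕ) {q : ℝ} (h0 : 0 ≤ q) (h1 : q < 1) :
    Summable (fun n => chi S n * q ^ n) := by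
  refine Summable.of_nonneg_of_le
    (fun n => mul_nonneg (chi_nonneg S n) (pow_nonneg h0 n))
    (fun n => ?_) (summable_geometric_of_lt_one h0 h1)
  calc chi S n * q ^ n ≤ 1 * q ^ n :=
        mul_le_mul_of_nonneg_right (chi_le_one S n) (pow_nonneg h0 n)
    _ = q ^ n := one_mul _

lemma genFun_eq (S : Set ℕ) (q : ℝ) : genFun S q = ∑' n : ℕ, chi S n * q ^ n := by
  unfold genFun
  rw [tsum_subtype]
  congr 1
  funext n
  classical
  unfold chi
  rw [Set.indicator_apply, Set.indicator_apply]
  split <;> simp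

/-- Key identity: for an eventually periodic set, `(1 - q^d) * genFun S q` is a polynomial. -/
lemma key (S : Set ℕ) (N d : ℕ) (hd : 1 ≤ d)
    (hper : ∀ n ≥ N, (n ∈ S ↔ n + d ∈ S)) {q : ℝ} (h0 : 0 < q) (h1 : q < 1) :
    (1 - q ^ d) * genFun S q
      = ∑ n ∈ Finset.range (N + d),
          (chi S n - if d ≤ n then chi S (n - d) else 0) * q ^ n := by
  classical
  have hsum := summable_chi S h0.le h1
  set g : ℕ → ℝ := fun n => if d ≤ n then chi S (n - d) * q ^ n else 0 with hg
  have hinj : Function.Injective (fun n : ℕ => n + d) := fun a b h => by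
    simp only [] at h; omega
  have hgval : ∀ n : ℕ, g (n + d) = chi S n * q ^ (n + d) := by
    intro n
    simp only [hg, if_pos (by omega : d ≤ n + d), Nat.add_sub_cancel]
  have hcomp : (g ∘ fun n : ℕ => n + d) = fun n => chi S n * q ^ (n + d) := by
    funext n
    exact hgval n
  have hsupp : Function.support g ⊆ Set.range (fun n : ℕ => n + d) := by
    intro x hx
    by_cases hdx : d ≤ x
    · exact ⟨x - d, by simp only []; omega⟩
    · exfalso; apply hx; simp [hg, hdx]
  have hshift : ∑' n : ℕ, chi S n * q ^ (n + d) = ∑' n : ℕ, g n := by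
    rw [← hinj.tsum_eq hsupp]
    exact tsum_congr fun n => (hgval n).symm
  have hgsum : Summable g := by
    rw [← hinj.summable_iff (fun x hx => by
      by_contra hne
      exact absurd (hsupp hne) hx)]
    rw [hcomp]
    have : (fun n : ℕ => chi S n * q ^ (n + d)) = fun n => q ^ d * (chi S n * q ^ n) := by
      funext n; rw [pow_add]; ring
    rw [this]
    exact hsum.mul_left _
  have hmul : q ^ d * genFun S q = ∑' n : ℕ, g n := by
    rw [genFun_eq, ← tsum_mul_left, ← hshift]
    congr 1; funext n; rw [pow_add]; ring
  have hlhs : (1 - q ^ d) * genFun S q = ∑' n : ℕ, (chi S n * q ^ n - g n) := by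
    rw [Summable.tsum_sub hsum hgsum, sub_mul, one_mul, hmul, genFun_eq]
  rw [hlhs]
  rw [tsum_eq_sum (s := Finset.range (N + d)) ?_]
  · apply Finset.sum_congr rfl
    intro n _
    by_cases hdn : d ≤ n
    · simp only [hg, if_pos hdn]; ring
    · simp only [hg, if_neg hdn]; ring
  · intro n hn
    have hnN : N + d ≤ n := by
      by_contra hc
      exact hn (Finset.mem_range.mpr (by omega))
    have hdn : d ≤ n := by omega
    have hchi : chi S (n - d) = chi S n := by
      have := hper (n - d) (by omega)
      rw [show n - d + d = n by omega] at this
      exact chi_congr this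
    simp only [hg, if_pos hdn, hchi]
    ring

/-- A period can be multiplied. -/
lemma per_mul (S : Set ℕ) (N d : ℕ) (hper : ∀ n ≥ N, (n ∈ S ↔ n + d ∈ S)) :
    ∀ k : ℕ, ∀ n ≥ N, (n ∈ S ↔ n + k * d ∈ S) := by
  intro k
  induction k with
  | zero => intro n _; simp
  | succ k ih =>
    intro n hn
    have h1 := ih n hn
    have h2 := hper (n + k * d) (by omega)
    rw [show n + (k + 1) * d = n + k * d + d by ring]
    exact h1.trans h2

/-- Eventual sign constancy of a polynomial near 1 from the left. -/
lemma poly_sign (K : ℕ) (b : ℕ → ℝ) :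
    ∃ ε > (0 : ℝ),
      (∀ q : ℝ, 1 - ε < q → q < 1 → 0 ≤ ∑ n ∈ Finset.range K, b n * q ^ n) ∨
      (∀ q : ℝ, 1 - ε < q → q < 1 → ∑ n ∈ Finset.range K, b n * q ^ n ≤ 0) := by
  classical
  set P : Polynomial ℝ := ∑ n ∈ Finset.range K, Polynomial.C (b n) * Polynomial.X ^ n with hP
  have hev : ∀ q : ℝ, P.eval q = ∑ n ∈ Finset.range K, b n * q ^ n := by
    intro q
    simp [hP, Polynomial.eval_finset_sum]
  by_cases hP0 : P = 0
  · refine ⟨1, one_pos, Or.inl fun q _ _ => ?_⟩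
    rw [← hev, hP0]; simp
  set s : Finset ℝ := insert (0 : ℝ) (P.roots.toFinset.filter (· < 1)) with hs
  have hsne : s.Nonempty := ⟨0, Finset.mem_insert_self _ _⟩
  obtain ⟨r, hrmem, hrmax⟩ : ∃ r ∈ s, ∀ x ∈ s, x ≤ r :=
    ⟨s.max' hsne, s.max'_mem hsne, fun x hx => s.le_max' x hx⟩
  have hr1 : r < 1 := by
    rw [hs] at hrmem
    rcases Finset.mem_insert.mp hrmem with h | h
    · rw [h]; norm_num
    · exact (Finset.mem_filter.mp h).2
  have hroot : ∀ q : ℝ, r < q → q < 1 → P.eval q ≠ 0 := by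
    intro q hq hq1 h0
    have hmem : q ∈ s := by
      rw [hs]
      refine Finset.mem_insert_of_mem (Finset.mem_filter.mpr ⟨?_, hq1⟩)
      rw [Multiset.mem_toFinset, Polynomial.mem_roots hP0]
      exact h0
    exact absurd (hrmax q hmem) (not_le.mpr hq)
  refine ⟨1 - r, by linarith, ?_⟩
  have hiff : ∀ q : ℝ, 1 - (1 - r) < q ↔ r < q := by intro q; constructor <;> intro <;> linarith
  by_cases hpos : ∀ q : ℝ, 1 - (1 - r) < q → q < 1 → 0 ≤ P.eval q
  · left
    intro q hq hq1
    rw [← hev]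
    exact hpos q hq hq1
  · right
    push_neg at hpos
    obtain ⟨q0, hq0r, hq01, hq0neg⟩ := hpos
    intro q hq hq1
    rw [← hev]
    by_contra hc
    push_neg at hc
    rcases le_total q0 q with hle | hle
    · have := intermediate_value_Icc hle P.continuous.continuousOn
      have h0mem : (0 : ℝ) ∈ Set.Icc (P.eval q0) (P.eval q) := ⟨hq0neg.le, hc.le⟩
      obtain ⟨c, hcmem, hc0⟩ := this h0mem
      exact hroot c (by rw [hiff] at hq0r; linarith [hcmem.1]) (lt_of_le_of_lt hcmem.2 hq1) hc0
    · have := intermediate_value_Icc' hle P.continuous.continuousOn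
      have h0mem : (0 : ℝ) ∈ Set.Icc (P.eval q0) (P.eval q) := ⟨hq0neg.le, hc.le⟩
      obtain ⟨c, hcmem, hc0⟩ := this h0mem
      exact hroot c (by rw [hiff] at hq; linarith [hcmem.1]) (lt_of_le_of_lt hcmem.2 hq01) hc0

/-- Any two eventually periodic subsets of ℕ are comparable in the germ order. -/
theorem stmt_7 (S S' : Set ℕ) (hS : EventuallyPeriodic S)
    (hS' : EventuallyPeriodic S') :
    germLE S S' ∨ germLE S' S := by
  classical
  obtain ⟨N, d, hd, hp⟩ := hS
  obtain ⟨N', d', hd', hp'⟩ := hS'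
  set D := d * d' with hD
  have hD1 : 1 ≤ D := Nat.one_le_iff_ne_zero.mpr (by positivity)
  set M := max N N' with hM
  have hpS : ∀ n ≥ M, (n ∈ S ↔ n + D ∈ S) := by
    intro n hn
    have := per_mul S N d hp d' n (le_trans (le_max_left _ _) hn)
    rwa [show d' * d = D by rw [hD]; ring] at this
  have hpS' : ∀ n ≥ M, (n ∈ S' ↔ n + D ∈ S') := by
    intro n hn
    exact per_mul S' N' d' hp' d n (le_trans (le_max_right _ _) hn)
  set bS : ℕ → ℝ := fun n => chi S n - if D ≤ n then chi S (n - D) else 0 with hbS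
  set bS' : ℕ → ℝ := fun n => chi S' n - if D ≤ n then chi S' (n - D) else 0 with hbS'
  obtain ⟨ε, hε, hsign⟩ := poly_sign (M + D) (fun n => bS n - bS' n)
  set ε' := min ε 1 with hε'
  have hε'pos : (0 : ℝ) < ε' := lt_min hε one_pos
  have hkey : ∀ q : ℝ, 1 - ε' < q → q < 1 →
      (0 < q ∧ 0 < 1 - q ^ D ∧ 1 - ε < q ∧
        (1 - q ^ D) * genFun S q - (1 - q ^ D) * genFun S' q
          = ∑ n ∈ Finset.range (M + D), (bS n - bS' n) * q ^ n) := by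
    intro q hq hq1
    have hq0 : 0 < q := by
      have : ε' ≤ 1 := min_le_right _ _
      linarith
    have hqε : 1 - ε < q := by
      have : ε' ≤ ε := min_le_left _ _
      linarith
    have hqD : 0 < 1 - q ^ D := by
      have : q ^ D < 1 := pow_lt_one₀ hq0.le hq1 (by omega)
      linarith
    refine ⟨hq0, hqD, hqε, ?_⟩
    rw [key S M D hD1 hpS hq0 hq1, key S' M D hD1 hpS' hq0 hq1, ← Finset.sum_sub_distrib]
    apply Finset.sum_congr rfl
    intro n _
    rw [hbS, hbS']
    ring
  rcases hsign with hpos | hneg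
  · right
    refine ⟨ε', hε'pos, fun q hq hq1 => ?_⟩
    obtain ⟨hq0, hqD, hqε, heq⟩ := hkey q hq hq1
    have h := hpos q hqε hq1
    rw [← heq] at h
    nlinarith
  · left
    refine ⟨ε', hε'pos, fun q hq hq1 => ?_⟩
    obtain ⟨hq0, hqD, hqε, heq⟩ := hkey q hq hq1
    have h := hneg q hqε hq1
    rw [← heq] at h
    nlinarith
end

section
/- Let D be a finite set of positive integers that is symmetric with offset k, i.e., k > max(D) and for all i, i ∈ D iff k−i ∈ D. Then every D-avoiding subset of {0,...,k−1}, when used as the repetend of a periodic set of period k, yields a D-avoiding subset of ℕ. That is, if S₀ ⊆ {0,...,k−1} is D-avoiding, then S = {n ∈ ℕ : n mod k ∈ S₀} is D-avoiding. -/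
/-- `S` is `D`-avoiding: no two elements of `S` differ by an element of `D`. -/
def DAvoiding (D : Finset ℕ) (S : Set ℕ) : Prop :=
  ∀ a ∈ S, ∀ b ∈ S, a < b → b - a ∉ D

/-- If `D` is symmetric with offset `k` (so `k > max D` and `i ∈ D ↔ k - i ∈ D`),
then any `D`-avoiding `S₀ ⊆ {0,…,k-1}`, repeated with period `k`, yields a
`D`-avoiding subset of ℕ. -/
theorem stmt_11 (D : Finset ℕ) (hDpos : ∀ d ∈ D, 0 < d)
    (k : ℕ) (hk : ∀ d ∈ D, d < k)
    (hsym : ∀ i : ℕ, 0 < i → i < k → (i ∈ D ↔ k - i ∈ D))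
    (S₀ : Set ℕ) (hS₀ : S₀ ⊆ Set.Iio k) (hA : DAvoiding D S₀) :
    DAvoiding D {n : ℕ | n % k ∈ S₀} := by
  intro a ha b hb hab hd
  simp only [Set.mem_setOf_eq] at ha hb
  set d := b - a with hdd
  have hdpos : 0 < d := Nat.sub_pos_of_lt hab
  have hdk : d < k := hk d hd
  have hkpos : 0 < k := lt_trans hdpos hdk
  have hb' : b = a + d := by omega
  have hrk : a % k < k := Nat.mod_lt _ hkpos
  have hbmod : b % k = (a % k + d) % k := by
    simp [hb', Nat.add_mod, Nat.mod_eq_of_lt hdk]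
  by_cases hc : a % k + d < k
  · have : b % k = a % k + d := by rw [hbmod, Nat.mod_eq_of_lt hc]
    exact hA (a % k) ha (b % k) hb (by omega) (by rw [this]; simpa using hd)
  · have h2 : a % k + d < 2 * k := by omega
    have : b % k = a % k + d - k := by
      rw [hbmod, Nat.mod_eq_sub_mod (by omega), Nat.mod_eq_of_lt (by omega)]
    have hlt : b % k < a % k := by omega
    have hdiff : a % k - b % k = k - d := by omega
    have : k - d ∈ D := (hsym d hdpos hdk).mp hd
    exact hA (b % k) hb (a % k) ha hlt (by rw [hdiff]; exact this)
end

section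
/- For D = {1, 2, ..., k−1} with k ≥ 2, the set S* = {0, k, 2k, 3k, ...} of multiples of k is D-avoiding and dominates in the germ order every D-avoiding subset S of ℕ: there exists ε > 0 with S_q ≤ S*_q for all q ∈ (1−ε, 1). -/
/-- For `D = {1,…,k-1}` with `k ≥ 2`, the set of multiples of `k` is
`D`-avoiding and dominates every `D`-avoiding set in the germ order. -/
theorem stmt_12 (k : ℕ) (hk : 2 ≤ k) :
    DAvoiding (Finset.Ico 1 k) {n : ℕ | k ∣ n} ∧
      ∀ S : Set ℕ, DAvoiding (Finset.Ico 1 k) S →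
        germLE S {n : ℕ | k ∣ n} := by
  have hk0 : 0 < k := by omega
  constructor
  · intro a ha b hb hab hmem
    simp only [Finset.mem_Ico] at hmem
    have hd : k ∣ b - a := Nat.dvd_sub hb ha
    have := Nat.le_of_dvd (by omega) hd
    omega
  · intro S hS
    refine ⟨1, one_pos, fun q hq1 hq2 => ?_⟩
    have hq0 : 0 < q := by linarith
    -- the injection
    have hsum : Summable (fun n : ℕ => q ^ n) :=
      summable_geometric_of_lt_one hq0.le hq2
    set f : S → {n : ℕ | k ∣ n} :=
      fun s => ⟨k * ((s : ℕ) / k), Dvd.intro _ rfl⟩ with hf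
    have hinj : Function.Injective f := by
      intro a b hab
      have h1 : k * ((a : ℕ) / k) = k * ((b : ℕ) / k) := congrArg Subtype.val hab
      have h2 : (a : ℕ) / k = (b : ℕ) / k := by
        exact Nat.eq_of_mul_eq_mul_left hk0 h1
      by_contra hne
      have hne' : (a : ℕ) ≠ (b : ℕ) := fun h => hne (Subtype.ext h)
      have ha := Nat.div_add_mod (a : ℕ) k
      have hb := Nat.div_add_mod (b : ℕ) k
      have hma := Nat.mod_lt (a : ℕ) hk0
      have hmb := Nat.mod_lt (b : ℕ) hk0
      rcases Nat.lt_or_ge (a : ℕ) (b : ℕ) with h | h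
      · exact hS a a.2 b b.2 h (by simp only [Finset.mem_Ico]; omega)
      · have h' : (b : ℕ) < (a : ℕ) := by omega
        exact hS b b.2 a a.2 h' (by simp only [Finset.mem_Ico]; omega)
    have hle : ∀ s : S, q ^ (s : ℕ) ≤ q ^ ((f s : ℕ)) := by
      intro s
      apply pow_le_pow_of_le_one hq0.le hq2.le
      simpa [hf, Nat.mul_comm] using Nat.div_mul_le_self (s : ℕ) k
    exact Summable.tsum_le_tsum_of_inj f hinj (fun c _ => pow_nonneg hq0.le _) hle
      (hsum.subtype S) (hsum.subtype _)
end

section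
/- Efficiency gap for D = {1}: if S* = {0,2,4,...} and S is any {1}-avoiding subset of ℕ other than S*, then limsup_{q→1⁻} (S_q − S*_q + 1/2) ≤ 0; equivalently S_q ≤ S*_q − 1/2 + O(1−q) as q → 1⁻. -/
open Filter Topology

open Classical in
/-- Split the generating function into even/odd pairs. -/
private lemma genFun_split {q : ℝ} (h0 : 0 < q) (h1 : q < 1) (T : Set ℕ) :
    genFun T q = ∑' k : ℕ, ((if 2*k ∈ T then q ^ (2*k) else 0) +
      (if 2*k+1 ∈ T then q ^ (2*k+1) else 0)) := by
  have hq20 : (0:ℝ) ≤ q ^ 2 := by positivity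
  have hq2 : q ^ 2 < 1 := by nlinarith
  have Sgeo : Summable (fun k : ℕ => (q ^ 2) ^ k) := summable_geometric_of_lt_one hq20 hq2
  set g : ℕ → ℝ := fun n => if n ∈ T then q ^ n else 0 with hg
  have hgnn : ∀ n, 0 ≤ g n := by
    intro n; simp only [hg]; split
    · positivity
    · exact le_rfl
  have hgle : ∀ n, g n ≤ q ^ n := by
    intro n; simp only [hg]; split
    · exact le_rfl
    · positivity
  have heven_le : ∀ k, g (2*k) ≤ (q ^ 2) ^ k :=
    fun k => (hgle (2*k)).trans (le_of_eq (pow_mul q 2 k))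
  have hodd_le : ∀ k, g (2*k+1) ≤ (q ^ 2) ^ k := by
    intro k
    refine (hgle (2*k+1)).trans ?_
    rw [pow_succ, pow_mul]
    exact mul_le_of_le_one_right (pow_nonneg hq20 k) h1.le
  have Se : Summable (fun k => g (2*k)) :=
    Summable.of_nonneg_of_le (fun k => hgnn _) heven_le Sgeo
  have So : Summable (fun k => g (2*k+1)) :=
    Summable.of_nonneg_of_le (fun k => hgnn _) hodd_le Sgeo
  calc genFun T q = ∑' n : ℕ, g n := by
        rw [genFun, tsum_subtype T (fun n => q ^ n)]
        exact tsum_congr fun n => by simp [Set.indicator_apply, hg]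
    _ = (∑' k : ℕ, g (2*k)) + ∑' k : ℕ, g (2*k+1) := (tsum_even_add_odd Se So).symm
    _ = ∑' k : ℕ, (g (2*k) + g (2*k+1)) := (Summable.tsum_add Se So).symm
    _ = _ := tsum_congr fun k => by simp [hg]

open Classical in
/-- If the pair `{2k, 2k+1}` is not fully contained in `S`, the pair contribution is
at most `(q^2)^k`. -/
private lemma pair_le {q : ℝ} (h0 : 0 < q) (h1 : q < 1) (S : Set ℕ) (k : ℕ)
    (h : ¬(2*k ∈ S ∧ 2*k+1 ∈ S)) :
    (if 2*k ∈ S then q ^ (2*k) else 0) + (if 2*k+1 ∈ S then q ^ (2*k+1) else 0)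
      ≤ (q ^ 2) ^ k := by
  have hq20 : (0:ℝ) ≤ q ^ 2 := by positivity
  have hA : q ^ (2*k) = (q ^ 2) ^ k := pow_mul q 2 k
  have hB : q ^ (2*k+1) ≤ (q ^ 2) ^ k := by
    rw [pow_succ, pow_mul]
    exact mul_le_of_le_one_right (pow_nonneg hq20 k) h1.le
  rcases not_and_or.mp h with h' | h'
  · rw [if_neg h', zero_add]
    split
    · exact hB
    · positivity
  · rw [if_neg h', add_zero]
    split
    · exact le_of_eq hA
    · positivity

open Classical in
/-- Main computational inequality, parameterized by a termwise bound `b`. -/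
private lemma calc_ineq {q : ℝ} (h0 : 0 < q) (h1 : q < 1) (S : Set ℕ) (m : ℕ) (b : ℕ → ℝ)
    (hb0 : ∀ k, 0 ≤ b k) (hble : ∀ k, b k ≤ (q ^ 2) ^ k)
    (hhb : ∀ k, ((if 2*k ∈ S then q ^ (2*k) else 0) +
      (if 2*k+1 ∈ S then q ^ (2*k+1) else 0)) ≤ b k)
    (hdef : q ^ (2*m) / 2 ≤ ∑' k : ℕ, ((q ^ 2) ^ k - b k)) :
    genFun S q ≤ genFun {n : ℕ | 2 ∣ n} q - q ^ (2*m) / 2 := by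
  have hq2 : q ^ 2 < 1 := by nlinarith
  have hq20 : (0:ℝ) ≤ q ^ 2 := by positivity
  have Sgeo : Summable (fun k : ℕ => (q ^ 2) ^ k) := summable_geometric_of_lt_one hq20 hq2
  have Sb : Summable b := Summable.of_nonneg_of_le hb0 hble Sgeo
  have hsummand : Summable (fun k : ℕ => ((if 2*k ∈ S then q ^ (2*k) else 0) +
      (if 2*k+1 ∈ S then q ^ (2*k+1) else 0))) := by
    refine Summable.of_nonneg_of_le (fun k => ?_) hhb Sb
    have t1 : (0:ℝ) ≤ (if 2*k ∈ S then q ^ (2*k) else 0) := by split <;> positivity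
    have t2 : (0:ℝ) ≤ (if 2*k+1 ∈ S then q ^ (2*k+1) else 0) := by split <;> positivity
    linarith
  have hE : genFun {n : ℕ | 2 ∣ n} q = ∑' k : ℕ, (q ^ 2) ^ k := by
    rw [genFun_split h0 h1 {n : ℕ | 2 ∣ n}]
    refine tsum_congr fun k => ?_
    have e1 : 2*k ∈ {n : ℕ | 2 ∣ n} := ⟨k, rfl⟩
    have e2 : 2*k+1 ∉ {n : ℕ | 2 ∣ n} := by simp only [Set.mem_setOf_eq]; omega
    rw [if_pos e1, if_neg e2, add_zero, pow_mul]
  rw [genFun_split h0 h1 S, hE]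
  have hmain := Summable.tsum_le_tsum hhb hsummand Sb
  have hsub : ∑' k : ℕ, ((q ^ 2) ^ k - b k)
      = (∑' k : ℕ, (q ^ 2) ^ k) - ∑' k : ℕ, b k := Summable.tsum_sub Sgeo Sb
  rw [hsub] at hdef
  linarith

open Classical in
/-- There is an `m` giving a uniform deficit `q^(2m)/2`. -/
private lemma key_s14 (S : Set ℕ) (hS : DAvoiding {1} S) (hne : S ≠ {n : ℕ | 2 ∣ n}) :
    ∃ m : ℕ, ∀ q : ℝ, 0 < q → q < 1 →
      genFun S q ≤ genFun {n : ℕ | 2 ∣ n} q - q ^ (2*m) / 2 := by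
  have hpair : ∀ k : ℕ, ¬(2*k ∈ S ∧ 2*k+1 ∈ S) := by
    rintro k ⟨ha, hb⟩
    have h' := hS _ ha _ hb (by omega)
    rw [show 2*k+1 - 2*k = 1 by omega] at h'
    exact h' (Finset.mem_singleton_self 1)
  by_cases hA : ∃ m, 2*m ∉ S ∧ 2*m+1 ∉ S
  · obtain ⟨m, hm1, hm2⟩ := hA
    refine ⟨m, fun q h0 h1 => ?_⟩
    have hq20 : (0:ℝ) ≤ q ^ 2 := by positivity
    refine calc_ineq h0 h1 S m (fun k => if k = m then 0 else (q ^ 2) ^ k)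
      (fun k => by split
                   · exact le_rfl
                   · positivity)
      (fun k => by split
                   · positivity
                   · exact le_rfl)
      (fun k => ?_) ?_
    · by_cases hk : k = m
      · subst hk
        rw [if_pos rfl, if_neg hm1, if_neg hm2, add_zero]
      · rw [if_neg hk]
        exact pair_le h0 h1 S k (hpair k)
    · have heq : (fun k : ℕ => (q ^ 2) ^ k - if k = m then 0 else (q ^ 2) ^ k)
          = fun k : ℕ => if k = m then (q ^ 2) ^ m else 0 := by
        funext k; by_cases hk : k = m <;> simp [hk]
      rw [heq, tsum_ite_eq m (fun _ => (q ^ 2) ^ m), pow_mul]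
      nlinarith [pow_nonneg hq20 m]
  · push_neg at hA
    -- hA : ∀ m, 2*m ∉ S → 2*m+1 ∈ S ;  find m with 2*m+1 ∈ S
    have hm0 : ∃ m₀, 2*m₀+1 ∈ S := by
      have hwit : ∃ n, ¬(n ∈ S ↔ n ∈ {n : ℕ | 2 ∣ n}) := by
        by_contra hc
        push_neg at hc
        exact hne (Set.ext hc)
      obtain ⟨n, hn⟩ := hwit
      rcases Nat.even_or_odd n with ⟨k, hk⟩ | ⟨k, hk⟩
      · have h2 : n ∈ {n : ℕ | 2 ∣ n} := ⟨k, by omega⟩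
        have hnS : n ∉ S := fun h => hn ⟨fun _ => h2, fun _ => h⟩
        refine ⟨k, hA k ?_⟩
        rwa [show 2*k = n by omega]
      · have h2 : n ∉ {n : ℕ | 2 ∣ n} := by simp only [Set.mem_setOf_eq]; omega
        have hnS : n ∈ S := by
          by_contra h
          exact hn ⟨fun hs => absurd hs h, fun hd => absurd hd h2⟩
        exact ⟨k, by rwa [show 2*k+1 = n by omega]⟩
    obtain ⟨m, hm⟩ := hm0
    have hodd : ∀ j, 2*(m+j)+1 ∈ S := by
      intro j
      induction j with
      | zero => simpa using hm
      | succ j ih =>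
        have hnot : 2*(m+j)+2 ∉ S := by
          intro h
          have h' := hS _ ih _ h (by omega)
          rw [show 2*(m+j)+2 - (2*(m+j)+1) = 1 by omega] at h'
          exact h' (Finset.mem_singleton_self 1)
        have := hA (m+j+1) (by rwa [show 2*(m+j+1) = 2*(m+j)+2 by omega])
        rwa [show m+(j+1) = m+j+1 by omega]
    have hoddk : ∀ k, m ≤ k → 2*k+1 ∈ S := by
      intro k hk
      have := hodd (k - m)
      rwa [show m + (k - m) = k by omega] at this
    have hevenk : ∀ k, m ≤ k → 2*k ∉ S := fun k hk h => hpair k ⟨h, hoddk k hk⟩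
    refine ⟨m, fun q h0 h1 => ?_⟩
    have hq20 : (0:ℝ) ≤ q ^ 2 := by positivity
    have hq2 : q ^ 2 < 1 := by nlinarith
    have Sgeo : Summable (fun k : ℕ => (q ^ 2) ^ k) := summable_geometric_of_lt_one hq20 hq2
    refine calc_ineq h0 h1 S m (fun k => if k < m then (q ^ 2) ^ k else q * (q ^ 2) ^ k)
      (fun k => by split <;> positivity)
      (fun k => ?_) (fun k => ?_) ?_
    · split
      · exact le_rfl
      · exact mul_le_of_le_one_left (pow_nonneg hq20 k) h1.le
    · by_cases hk : k < m
      · rw [if_pos hk]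
        exact pair_le h0 h1 S k (hpair k)
      · push_neg at hk
        rw [if_neg (not_lt.mpr hk), if_neg (hevenk k hk), if_pos (hoddk k hk), zero_add,
          pow_succ, pow_mul]
        ring_nf
        exact le_rfl
    · -- deficit: sum of (1-q)*(q^2)^k over k ≥ m is at least q^(2m)/2
      set c : ℕ → ℝ := fun k => (q ^ 2) ^ k - if k < m then (q ^ 2) ^ k else q * (q ^ 2) ^ k
        with hc
      have hcval : ∀ k, c k = if k < m then 0 else (1 - q) * (q ^ 2) ^ k := by
        intro k; simp only [hc]; split <;> ring
      have hcnn : ∀ k, 0 ≤ c k := by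
        intro k; rw [hcval k]; split
        · exact le_rfl
        · have := pow_nonneg hq20 k; nlinarith
      have Sc : Summable c := by
        refine Summable.of_nonneg_of_le hcnn (fun k => ?_) Sgeo
        rw [hcval k]; split
        · positivity
        · nlinarith [pow_nonneg hq20 k]
      have hshift : ∀ j : ℕ, (1 - q) * (q ^ 2) ^ m * (q ^ 2) ^ j ≤ c (m + j) := by
        intro j
        rw [hcval (m + j), if_neg (by omega), pow_add]
        ring_nf
        exact le_rfl
      have Sc' : Summable (fun j : ℕ => (1 - q) * (q ^ 2) ^ m * (q ^ 2) ^ j) :=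
        Sgeo.mul_left _
      have hinj : ∑' j : ℕ, (1 - q) * (q ^ 2) ^ m * (q ^ 2) ^ j ≤ ∑' k : ℕ, c k :=
        Summable.tsum_le_tsum_of_inj (fun j => m + j) (add_right_injective m)
          (fun k _ => hcnn k) hshift Sc' Sc
      have hgeo : ∑' j : ℕ, (1 - q) * (q ^ 2) ^ m * (q ^ 2) ^ j
          = (1 - q) * (q ^ 2) ^ m * (1 - q ^ 2)⁻¹ := by
        rw [tsum_mul_left, tsum_geometric_of_lt_one hq20 hq2]
      have hhalf : q ^ (2*m) / 2 ≤ (1 - q) * (q ^ 2) ^ m * (1 - q ^ 2)⁻¹ := by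
        rw [pow_mul]
        have hpos : (0:ℝ) < 1 - q ^ 2 := by nlinarith
        rw [mul_comm ((1:ℝ) - q) _, mul_assoc, ← div_eq_mul_inv]
        have h12 : (1:ℝ) / 2 ≤ (1 - q) / (1 - q ^ 2) := by
          rw [div_le_div_iff₀ (by norm_num) hpos]
          nlinarith
        calc (q ^ 2) ^ m / 2 = (q ^ 2) ^ m * (1 / 2) := by ring
          _ ≤ (q ^ 2) ^ m * ((1 - q) / (1 - q ^ 2)) :=
              mul_le_mul_of_nonneg_left h12 (pow_nonneg hq20 m)
      calc q ^ (2*m) / 2 ≤ (1 - q) * (q ^ 2) ^ m * (1 - q ^ 2)⁻¹ := hhalf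
        _ = ∑' j : ℕ, (1 - q) * (q ^ 2) ^ m * (q ^ 2) ^ j := hgeo.symm
        _ ≤ ∑' k : ℕ, c k := hinj

/-- Efficiency gap for `D = {1}`: if `S* = {0,2,4,…}` and `S ≠ S*` is
`{1}`-avoiding, then `limsup_{q→1⁻} (S_q - S*_q + 1/2) ≤ 0`; equivalently,
`S_q ≤ S*_q - 1/2 + O(1-q)` as `q → 1⁻`. -/
theorem stmt_14 (S : Set ℕ) (hS : DAvoiding {1} S)
    (hne : S ≠ {n : ℕ | 2 ∣ n}) :
    limsup (fun q : ℝ => genFun S q - genFun {n : ℕ | 2 ∣ n} q + 1 / 2)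
        (𝓝[<] (1 : ℝ)) ≤ 0 ∧
    ∃ C > (0 : ℝ), ∃ ε > (0 : ℝ), ∀ q : ℝ, 1 - ε < q → q < 1 →
      genFun S q ≤ genFun {n : ℕ | 2 ∣ n} q - 1 / 2 + C * (1 - q) := by
  obtain ⟨m, hm⟩ := key_s14 S hS hne
  have hbound : ∀ q : ℝ, 0 < q → q < 1 →
      genFun S q ≤ genFun {n : ℕ | 2 ∣ n} q - 1 / 2 + ((m : ℝ) + 1) * (1 - q) := by
    intro q h0 h1
    have h := hm q h0 h1
    have hbern : 1 + ((2*m : ℕ) : ℝ) * (q - 1) ≤ (1 + (q - 1)) ^ (2*m) :=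
      one_add_mul_le_pow (by linarith) (2*m)
    have hq : (1 : ℝ) + (q - 1) = q := by ring
    rw [hq] at hbern
    push_cast at hbern
    nlinarith
  constructor
  · -- limsup part
    have hle : ∀ᶠ q in 𝓝[<] (1:ℝ),
        genFun S q - genFun {n : ℕ | 2 ∣ n} q + 1 / 2 ≤ ((m : ℝ) + 1) * (1 - q) := by
      filter_upwards [Ioo_mem_nhdsLT_of_mem (show (1:ℝ) ∈ Set.Ioc 0 1 by norm_num)]
        with q hq
      have := hbound q hq.1 hq.2
      linarith
    rw [limsup_eq]
    by_cases hbdd : BddBelow {a : ℝ | ∀ᶠ q in 𝓝[<] (1:ℝ),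
        genFun S q - genFun {n : ℕ | 2 ∣ n} q + 1 / 2 ≤ a}
    · refine le_of_forall_pos_le_add fun ε hε => ?_
      rw [zero_add]
      refine csInf_le hbdd ?_
      have hmem : Set.Ioi (1 - ε / ((m : ℝ) + 1)) ∈ 𝓝[<] (1:ℝ) := by
        refine nhdsWithin_le_nhds (Ioi_mem_nhds ?_)
        have : (0:ℝ) < ε / ((m : ℝ) + 1) := by positivity
        linarith
      filter_upwards [hle, hmem] with q hq1 hq2
      have hmp : (0:ℝ) < (m : ℝ) + 1 := by positivity
      have hlt : 1 - q < ε / ((m : ℝ) + 1) := by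
        simp only [Set.mem_Ioi] at hq2; linarith
      have h2 : ((m : ℝ) + 1) * (1 - q) < ε := by
        rw [mul_comm]
        calc ((1:ℝ) - q) * ((m : ℝ) + 1) < (ε / ((m : ℝ) + 1)) * ((m : ℝ) + 1) :=
              mul_lt_mul_of_pos_right hlt hmp
          _ = ε := by field_simp
      linarith
    · rw [Real.sInf_of_not_bddBelow hbdd]
  · exact ⟨(m : ℝ) + 1, by positivity, 1, one_pos,
      fun q hq1 hq2 => hbound q (by linarith) hq2⟩
end

section
/- Swap lemma for circular words: let P, P' be polynomials with coefficients in {0,1}, and A = q^a, A' = q^{a'} with a, a' ≥ 1. If P/(1−A) ⪯ P'/(1−A') in the germ order at 1⁻, then P/(1−A) ⪯ (P + AP')/(1−AA') ⪯ (P' + A'P)/(1−AA') ⪯ P'/(1−A'). -/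
/-- Germ order at `1⁻` on real functions. -/
def fgermLE (f g : ℝ → ℝ) : Prop :=
  ∃ ε > (0 : ℝ), ∀ q : ℝ, 1 - ε < q → q < 1 → f q ≤ g q

/-- Swap lemma for circular words: if `P/(1-q^a) ⪯ P'/(1-q^{a'})` then
`P/(1-q^a) ⪯ (P+q^aP')/(1-q^{a+a'}) ⪯ (P'+q^{a'}P)/(1-q^{a+a'}) ⪯ P'/(1-q^{a'})`. -/
theorem stmt_15 (P P' : Polynomial ℝ)
    (hP : ∀ n, P.coeff n = 0 ∨ P.coeff n = 1)
    (hP' : ∀ n, P'.coeff n = 0 ∨ P'.coeff n = 1)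
    (a a' : ℕ) (ha : 1 ≤ a) (ha' : 1 ≤ a')
    (h : fgermLE (fun q => P.eval q / (1 - q ^ a))
      (fun q => P'.eval q / (1 - q ^ a'))) :
    fgermLE (fun q => P.eval q / (1 - q ^ a))
        (fun q => (P.eval q + q ^ a * P'.eval q) / (1 - q ^ (a + a'))) ∧
    fgermLE (fun q => (P.eval q + q ^ a * P'.eval q) / (1 - q ^ (a + a')))
        (fun q => (P'.eval q + q ^ a' * P.eval q) / (1 - q ^ (a + a'))) ∧
    fgermLE (fun q => (P'.eval q + q ^ a' * P.eval q) / (1 - q ^ (a + a')))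
        (fun q => P'.eval q / (1 - q ^ a')) := by
  obtain ⟨ε, hε, hle⟩ := h
  have hεm : 0 < min ε 1 := lt_min hε one_pos
  have key : ∀ q : ℝ, 1 - min ε 1 < q → q < 1 →
      0 < q ∧ 0 < 1 - q ^ a ∧ 0 < 1 - q ^ a' ∧ 0 < 1 - q ^ (a + a') ∧
      P.eval q * (1 - q ^ a') ≤ P'.eval q * (1 - q ^ a) := by
    intro q hq1 hq2
    have hq0 : 0 < q := by
      have : min ε 1 ≤ 1 := min_le_right _ _
      linarith
    have hA : 0 < 1 - q ^ a := by
      have := pow_lt_one₀ hq0.le hq2 (show a ≠ 0 by omega)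
      linarith
    have hA' : 0 < 1 - q ^ a' := by
      have := pow_lt_one₀ hq0.le hq2 (show a' ≠ 0 by omega)
      linarith
    have hAA' : 0 < 1 - q ^ (a + a') := by
      have := pow_lt_one₀ hq0.le hq2 (by omega : a + a' ≠ 0)
      linarith
    have h1 : P.eval q / (1 - q ^ a) ≤ P'.eval q / (1 - q ^ a') := by
      have : min ε 1 ≤ ε := min_le_left _ _
      exact hle q (by linarith) hq2
    rw [div_le_div_iff₀ hA hA'] at h1
    exact ⟨hq0, hA, hA', hAA', h1⟩
  refine ⟨⟨min ε 1, hεm, ?_⟩, ⟨min ε 1, hεm, ?_⟩, ⟨min ε 1, hεm, ?_⟩⟩ <;>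
    intro q hq1 hq2 <;>
    obtain ⟨hq0, hA, hA', hAA', hk⟩ := key q hq1 hq2 <;>
    simp only [] <;>
    rw [div_le_div_iff₀ (by assumption) (by assumption), pow_add] at *
  · nlinarith [mul_nonneg (pow_nonneg hq0.le a) (sub_nonneg.2 hk)]
  · nlinarith [sub_nonneg.2 hk]
  · nlinarith [mul_nonneg (pow_nonneg hq0.le a') (sub_nonneg.2 hk)]
end

section
/- Strict swap lemma: with P, P', A = q^a, A' = q^{a'} as above (coefficients of P, P' in {0,1}, a, a' ≥ 1), if P/(1−A) ≺ P'/(1−A') (strict germ inequality at 1⁻), then P/(1−A) ≺ (P + AP')/(1−AA') ≺ (P' + A'P)/(1−AA') ≺ P'/(1−A'). -/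
/-- Germ order at `1⁻` on real functions. -/
def fgermLT (f g : ℝ → ℝ) : Prop :=
  ∃ ε > (0 : ℝ), ∀ q : ℝ, 1 - ε < q → q < 1 → f q < g q

/-- Strict swap lemma: if `P/(1-q^a) ≺ P'/(1-q^{a'})` then
`P/(1-q^a) ≺ (P+q^aP')/(1-q^{a+a'}) ≺ (P'+q^{a'}P)/(1-q^{a+a'}) ≺ P'/(1-q^{a'})`. -/
theorem stmt_16 (P P' : Polynomial ℝ)
    (hP : ∀ n, P.coeff n = 0 ∨ P.coeff n = 1)
    (hP' : ∀ n, P'.coeff n = 0 ∨ P'.coeff n = 1)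
    (a a' : ℕ) (ha : 1 ≤ a) (ha' : 1 ≤ a')
    (h : fgermLT (fun q => P.eval q / (1 - q ^ a))
      (fun q => P'.eval q / (1 - q ^ a'))) :
    fgermLT (fun q => P.eval q / (1 - q ^ a))
        (fun q => (P.eval q + q ^ a * P'.eval q) / (1 - q ^ (a + a'))) ∧
    fgermLT (fun q => (P.eval q + q ^ a * P'.eval q) / (1 - q ^ (a + a')))
        (fun q => (P'.eval q + q ^ a' * P.eval q) / (1 - q ^ (a + a'))) ∧
    fgermLT (fun q => (P'.eval q + q ^ a' * P.eval q) / (1 - q ^ (a + a')))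
        (fun q => P'.eval q / (1 - q ^ a')) := by
  obtain ⟨ε, hε, hfg⟩ := h
  set ε' := min ε 1 with hε'def
  have hε'0 : 0 < ε' := lt_min hε one_pos
  have key : ∀ q : ℝ, 1 - ε' < q → q < 1 →
      0 < q ∧ 0 < 1 - q ^ a ∧ 0 < 1 - q ^ a' ∧ 0 < 1 - q ^ (a + a') ∧
      P.eval q * (1 - q ^ a') < P'.eval q * (1 - q ^ a) := by
    intro q hq1 hq2
    have hq0 : 0 < q := by
      have : ε' ≤ 1 := min_le_right ε 1
      linarith
    have hA : q ^ a < 1 := pow_lt_one₀ hq0.le hq2 (by omega)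
    have hA' : q ^ a' < 1 := pow_lt_one₀ hq0.le hq2 (by omega)
    have hAA' : q ^ (a + a') < 1 := pow_lt_one₀ hq0.le hq2 (by omega)
    have hlt : P.eval q / (1 - q ^ a) < P'.eval q / (1 - q ^ a') := by
      have : ε' ≤ ε := min_le_left ε 1
      exact hfg q (by linarith) hq2
    rw [div_lt_div_iff₀ (by linarith) (by linarith)] at hlt
    exact ⟨hq0, by linarith, by linarith, by linarith, hlt⟩
  refine ⟨⟨ε', hε'0, ?_⟩, ⟨ε', hε'0, ?_⟩, ⟨ε', hε'0, ?_⟩⟩ <;>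
  · intro q hq1 hq2
    obtain ⟨hq0, hA, hA', hAA', hD⟩ := key q hq1 hq2
    have hpa : 0 < q ^ a := pow_pos hq0 a
    have hpa' : 0 < q ^ a' := pow_pos hq0 a'
    have hadd : q ^ (a + a') = q ^ a * q ^ a' := pow_add q a a'
    simp only
    rw [div_lt_div_iff₀ (by linarith) (by linarith), pow_add]
    nlinarith [mul_pos hpa (sub_pos.mpr (by nlinarith : P.eval q * (1 - q ^ a') < P'.eval q * (1 - q ^ a))), mul_pos hpa' (sub_pos.mpr (by nlinarith : P.eval q * (1 - q ^ a') < P'.eval q * (1 - q ^ a)))]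
end

section
/- Every germ-maximal D-avoiding subset of ℕ is eventually periodic: if D is a finite set of positive integers and S is a D-avoiding set such that S' ⪯ S for every D-avoiding set S' comparable to S (in particular S is germ-maximal), then S is eventually periodic. -/
/-- Strict germ domination: `S ≺ S'` iff `S_q < S'_q` for all `q` near `1⁻`. -/
def germLT (S S' : Set ℕ) : Prop :=
  ∃ ε > (0 : ℝ), ∀ q : ℝ, 1 - ε < q → q < 1 → genFun S q < genFun S' q

namespace Stmt17
open Finset

noncomputable def tv (f : ℕ → Bool) (q : ℝ) : ℝ := ∑' n, (if f n then q ^ n else 0)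

lemma summable_tv (f : ℕ → Bool) {q : ℝ} (h0 : 0 ≤ q) (h1 : q < 1) :
    Summable (fun n => if f n then q ^ n else (0:ℝ)) := by
  apply Summable.of_nonneg_of_le (fun n => ?_) (fun n => ?_)
    (summable_geometric_of_lt_one h0 h1)
  · split <;> positivity
  · split
    · exact le_refl _
    · positivity

lemma tv_nonneg (f : ℕ → Bool) {q : ℝ} (h0 : 0 ≤ q) : 0 ≤ tv f q :=
  tsum_nonneg (fun n => by split <;> positivity)

lemma tv_le (f : ℕ → Bool) {q : ℝ} (h0 : 0 ≤ q) (h1 : q < 1) : tv f q ≤ (1 - q)⁻¹ := by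
  rw [← tsum_geometric_of_lt_one h0 h1]
  exact Summable.tsum_le_tsum (fun n => by split; exacts [le_refl _, by positivity])
    (summable_tv f h0 h1) (summable_geometric_of_lt_one h0 h1)

lemma tv_split (f : ℕ → Bool) {q : ℝ} (h0 : 0 ≤ q) (h1 : q < 1) (N : ℕ) :
    tv f q = (∑ x ∈ range N, (if f x then q ^ x else 0)) + q ^ N * tv (fun n => f (N + n)) q := by
  have hs := summable_tv f h0 h1
  rw [tv, ← Summable.sum_add_tsum_nat_add N hs]
  congr 1
  rw [tv, ← tsum_mul_left]
  congr 1
  funext n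
  rw [add_comm n N]
  split <;> simp [pow_add, mul_comm]

lemma tv_shift (f : ℕ → Bool) {q : ℝ} (h0 : 0 ≤ q) (h1 : q < 1) :
    tv f q = (if f 0 then (1:ℝ) else 0) + q * tv (fun n => f (1 + n)) q := by
  have := tv_split f h0 h1 1
  simpa using this


section Machine

variable (D : Finset ℕ) (m : ℕ)

abbrev St := Fin m → Bool

def ok (s : St m) (b : Bool) : Prop :=
  b = true → ∀ i : Fin m, ((i : ℕ) + 1) ∈ D → s i = false

instance : DecidablePred (fun p : St m × Bool => ok D m p.1 p.2) := by
  intro p; unfold ok; infer_instance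

def step (s : St m) (b : Bool) : St m :=
  fun i => if (i : ℕ) = 0 then b else s ⟨(i : ℕ) - 1, lt_of_le_of_lt (Nat.sub_le _ _) i.2⟩

/-- the window of length m before position n (positions n-1, ..., n-m). -/
def win (c : ℕ → Bool) (n : ℕ) : St m := fun i => c (n - ((i : ℕ) + 1))

lemma win_step (c : ℕ → Bool) (n : ℕ) (hn : m ≤ n) :
    win m c (n + 1) = step m (win m c n) (c n) := by
  funext i
  rcases Nat.eq_zero_or_pos (i : ℕ) with h | h
  · simp [win, step, h]
  · have h1 : (i:ℕ) ≠ 0 := Nat.pos_iff_ne_zero.mp h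
    simp only [win, step, h1, if_false]
    congr 1
    omega

def wseq (s : St m) (g : ℕ → Bool) : ℕ → St m
  | 0 => s
  | x + 1 => step m (wseq s g x) (g x)

def Feas (s : St m) (g : ℕ → Bool) : Prop := ∀ x, ok D m (wseq m s g x) (g x)

def stseq (π : St m → Bool) (s : St m) : ℕ → St m
  | 0 => s
  | x + 1 => step m (stseq π s x) (π (stseq π s x))

def traj (π : St m → Bool) (s : St m) : ℕ → Bool := fun x => π (stseq m π s x)

lemma wseq_traj (π : St m → Bool) (s : St m) (x : ℕ) :
    wseq m s (traj m π s) x = stseq m π s x := by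
  induction x with
  | zero => rfl
  | succ x ih => simp [wseq, stseq, ih, traj]

lemma Feas_traj (π : St m → Bool) (hπ : ∀ s, ok D m s (π s)) (s : St m) :
    Feas D m s (traj m π s) := by
  intro x; rw [wseq_traj]; exact hπ _

lemma stseq_add (π : St m → Bool) (s : St m) (a b : ℕ) :
    stseq m π s (a + b) = stseq m π (stseq m π s a) b := by
  induction b with
  | zero => rfl
  | succ b ih => simp [← Nat.add_assoc, stseq, ih]

lemma stseq_shift (π : St m → Bool) (s : St m) (x : ℕ) :
    stseq m π s (x + 1) = stseq m π (step m s (π s)) x := by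
  rw [Nat.add_comm, stseq_add]; rfl

lemma traj_shift (π : St m → Bool) (s : St m) :
    (fun n => traj m π s (1 + n)) = traj m π (step m s (π s)) := by
  funext n; rw [traj, Nat.add_comm, stseq_shift]; rfl

/-- eventually periodic Bool functions -/
def EP (f : ℕ → Bool) (k p : ℕ) : Prop := ∀ n, k ≤ n → f (n + p) = f n

lemma stseq_per (π : St m → Bool) (s : St m) (a b : ℕ) (hab : a < b)
    (h : stseq m π s a = stseq m π s b) :
    ∀ n, a ≤ n → stseq m π s (n + (b - a)) = stseq m π s n := by
  intro n hn
  have e1 : n + (b - a) = b + (n - a) := by omega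
  have e2 : n = a + (n - a) := by omega
  rw [e1, stseq_add, ← h, ← stseq_add, ← e2]

lemma traj_EP (π : St m → Bool) (s : St m) :
    ∃ k p, 1 ≤ p ∧ EP (traj m π s) k p := by
  classical
  obtain ⟨x, y, hxy, hfe⟩ := Fintype.exists_ne_map_eq_of_card_lt
    (fun i : Fin (Fintype.card (St m) + 1) => stseq m π s i) (by simp)
  rcases Ne.lt_or_gt hxy with h | h
  · exact ⟨x, y - x, by omega, fun n hn => by
      rw [traj, traj, stseq_per m π s x y h hfe n hn]⟩
  · exact ⟨y, x - y, by omega, fun n hn => by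
      rw [traj, traj, stseq_per m π s y x h hfe.symm n hn]⟩

end Machine

section Poly
open Polynomial

noncomputable def A (f : ℕ → Bool) (n : ℕ) : ℝ := if f n then 1 else 0

noncomputable def coef (f : ℕ → Bool) (p n : ℕ) : ℝ :=
  A f n - (if p ≤ n then A f (n - p) else 0)

noncomputable def pf (f : ℕ → Bool) (k p : ℕ) : Polynomial ℝ :=
  ∑ n ∈ Finset.range (k + p), Polynomial.monomial n (coef f p n)

lemma ite_pow_eq (f : ℕ → Bool) (q : ℝ) (n : ℕ) :
    (if f n then q ^ n else 0) = A f n * q ^ n := by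
  unfold A; split <;> ring

lemma pf_eval (f : ℕ → Bool) (k p : ℕ) (q : ℝ) :
    (pf f k p).eval q = ∑ n ∈ Finset.range (k + p), coef f p n * q ^ n := by
  rw [pf, Polynomial.eval_finset_sum]
  exact Finset.sum_congr rfl fun n _ => by rw [Polynomial.eval_monomial]

lemma pf_coeff (f : ℕ → Bool) (k p j : ℕ) (hj : j < k + p) :
    (pf f k p).coeff j = coef f p j := by
  rw [pf, Polynomial.finset_sum_coeff]
  rw [Finset.sum_eq_single j (fun n _ hne => by
    rw [Polynomial.coeff_monomial, if_neg hne]) (fun hj' => absurd (Finset.mem_range.mpr hj) hj')]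
  rw [Polynomial.coeff_monomial, if_pos rfl]

lemma tv_pf (f : ℕ → Bool) (k p : ℕ) (hp : 1 ≤ p) (hep : EP f k p)
    {q : ℝ} (h0 : 0 ≤ q) (h1 : q < 1) :
    (1 - q ^ p) * tv f q = (pf f k p).eval q := by
  have e1 := tv_split f h0 h1 (k + p)
  have e2 := tv_split f h0 h1 k
  have hshift : (fun n => f (k + p + n)) = (fun n => f (k + n)) := by
    funext n
    have h : k + p + n = (k + n) + p := by ring
    rw [h, hep (k + n) (Nat.le_add_right _ _)]
  rw [hshift] at e1
  have key : ∑ n ∈ Finset.range (k + p), (if p ≤ n then A f (n - p) else 0) * q ^ n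
      = q ^ p * (∑ x ∈ Finset.range k, (if f x then q ^ x else 0)) := by
    rw [← Finset.sum_subset (s₁ := Finset.Ico p (k + p)) (s₂ := Finset.range (k + p))
      (by intro x hx; simp only [Finset.mem_Ico] at hx; simp only [Finset.mem_range]; omega)
      (fun x _ hx => by
        have hnp : ¬ p ≤ x := by
          intro hc
          simp only [Finset.mem_range] at *
          exact hx (Finset.mem_Ico.mpr ⟨hc, by omega⟩)
        rw [if_neg hnp, zero_mul])]
    rw [Finset.sum_Ico_eq_sum_range]
    have hk : k + p - p = k := by omega
    rw [hk, Finset.mul_sum]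
    refine Finset.sum_congr rfl fun n _ => ?_
    have h1' : p ≤ p + n := Nat.le_add_right p n
    have h2' : p + n - p = n := by omega
    rw [if_pos h1', h2', ite_pow_eq, pow_add]
    ring
  have expand : (1 - q ^ p) * tv f q = tv f q - q ^ p * tv f q := by ring
  rw [expand]
  nth_rewrite 1 [e1]
  rw [e2, pf_eval]
  have hc : ∀ n ∈ Finset.range (k + p), coef f p n * q ^ n
      = (if f n then q ^ n else 0) - (if p ≤ n then A f (n - p) else 0) * q ^ n := by
    intro n _; rw [coef, ite_pow_eq]; ring
  rw [Finset.sum_congr rfl hc, Finset.sum_sub_distrib, key, pow_add]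
  ring

end Poly

lemma A_inj {f g : ℕ → Bool} {n m : ℕ} (h : A f n = A g m) : f n = g m := by
  unfold A at h
  cases hf : f n <;> cases hg : g m <;> simp [hf, hg] at h ⊢ <;> norm_num at h

lemma pf_inj {f g : ℕ → Bool} {k p : ℕ} (hp : 1 ≤ p) (hf : EP f k p) (hg : EP g k p)
    (h : pf f k p = pf g k p) : f = g := by
  have hcoef : ∀ n < k + p, coef f p n = coef g p n := by
    intro n hn
    rw [← pf_coeff f k p n hn, ← pf_coeff g k p n hn, h]
  funext n
  induction n using Nat.strong_induction_on with
  | _ n ih =>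
    rcases lt_or_ge n p with hnp | hnp
    · have := hcoef n (by omega)
      rw [coef, coef, if_neg (by omega), if_neg (by omega)] at this
      simp only [sub_zero] at this
      exact A_inj this
    · rcases lt_or_ge n (k + p) with hkp | hkp
      · have hc := hcoef n hkp
        rw [coef, coef, if_pos hnp, if_pos hnp] at hc
        have hprev : f (n - p) = g (n - p) := ih (n - p) (by omega)
        have : A f (n - p) = A g (n - p) := by rw [A, A, hprev]
        have : A f n = A g n := by linarith [hc, this]
        exact A_inj this
      · have hf' : f n = f (n - p) := by
          have := hf (n - p) (by omega)
          rw [Nat.sub_add_cancel (by omega)] at this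
          exact this
        have hg' : g n = g (n - p) := by
          have := hg (n - p) (by omega)
          rw [Nat.sub_add_cancel (by omega)] at this
          exact this
        rw [hf', hg', ih (n - p) (by omega)]

lemma EP_mono {f : ℕ → Bool} {k p k' : ℕ} (h : EP f k p) (hk : k ≤ k') : EP f k' p :=
  fun n hn => h n (le_trans hk hn)

lemma EP_mul {f : ℕ → Bool} {k p : ℕ} (h : EP f k p) (c : ℕ) : EP f k (c * p) := by
  induction c with
  | zero => intro n _; simp
  | succ c ih =>
    intro n hn
    have : n + (c + 1) * p = (n + c * p) + p := by ring
    rw [this, h (n + c * p) (by omega), ih n hn]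

/-- Two eventually periodic tails with equal values on an interval are equal. -/
lemma tv_inj {f g : ℕ → Bool} {k1 p1 k2 p2 : ℕ} (hp1 : 1 ≤ p1) (hp2 : 1 ≤ p2)
    (hf : EP f k1 p1) (hg : EP g k2 p2) {a : ℝ} (ha : a < 1) (ha0 : 0 ≤ a)
    (h : ∀ q : ℝ, a < q → q < 1 → tv f q = tv g q) : f = g := by
  set k := max k1 k2 with hk
  set p := p1 * p2 with hp
  have hpge : 1 ≤ p := Nat.one_le_iff_ne_zero.mpr (by positivity)
  have hf' : EP f k p := EP_mono (by rw [hp, Nat.mul_comm]; exact EP_mul hf p2) (le_max_left _ _)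
  have hg' : EP g k p := EP_mono (EP_mul hg p1) (le_max_right _ _)
  apply pf_inj hpge hf' hg'
  apply Polynomial.eq_of_infinite_eval_eq
  apply Set.Infinite.mono (s := Set.Ioo a 1) ?_ (Set.Ioo_infinite ha)
  intro q hq
  simp only [Set.mem_setOf_eq]
  rw [← tv_pf f k p hpge hf' (by linarith [hq.1]) hq.2,
    ← tv_pf g k p hpge hg' (by linarith [hq.1]) hq.2, h q hq.1 hq.2]


section Values

variable (D : Finset ℕ) (m : ℕ)

instance okDec (s : St m) (b : Bool) : Decidable (ok D m s b) := by
  unfold ok; infer_instance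

def Pol := {π : St m → Bool // ∀ s, ok D m s (π s)}

noncomputable instance : Fintype (Pol D m) := by
  unfold Pol; exact Subtype.fintype _

instance : Nonempty (Pol D m) := ⟨⟨fun _ => false, fun s h => nomatch h⟩⟩

noncomputable def pval (π : Pol D m) (s : St m) (q : ℝ) : ℝ := tv (traj m π.1 s) q

lemma pval_rec (π : Pol D m) (s : St m) {q : ℝ} (h0 : 0 ≤ q) (h1 : q < 1) :
    pval D m π s q = (if π.1 s then (1:ℝ) else 0) + q * pval D m π (step m s (π.1 s)) q := by
  rw [pval, tv_shift _ h0 h1, traj_shift]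
  rfl

lemma pval_nonneg (π : Pol D m) (s : St m) {q : ℝ} (h0 : 0 ≤ q) : 0 ≤ pval D m π s q :=
  tv_nonneg _ h0

lemma pval_le (π : Pol D m) (s : St m) {q : ℝ} (h0 : 0 ≤ q) (h1 : q < 1) :
    pval D m π s q ≤ (1 - q)⁻¹ := tv_le _ h0 h1

/-- one-step-improvement implies global improvement (lower bound by `W`). -/
lemma pval_ge_of_onestep (π : Pol D m) (W : St m → ℝ) {q : ℝ} (h0 : 0 ≤ q) (h1 : q < 1)
    (hWb : ∀ y, W y ≤ (1 - q)⁻¹)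
    (hW : ∀ y, W y ≤ (if π.1 y then (1:ℝ) else 0) + q * W (step m y (π.1 y))) :
    ∀ x, W x ≤ pval D m π x q := by
  intro x
  have hpart : ∀ N : ℕ, W x ≤ (∑ j ∈ Finset.range N, (if traj m π.1 x j then q ^ j else 0))
      + q ^ N * W (stseq m π.1 x N) := by
    intro N
    induction N with
    | zero => simp [stseq]
    | succ N ih =>
      refine le_trans ih ?_
      rw [Finset.sum_range_succ]
      have hb := hW (stseq m π.1 x N)
      have hq : (0:ℝ) ≤ q ^ N := by positivity
      have : q ^ N * W (stseq m π.1 x N)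
          ≤ q ^ N * ((if π.1 (stseq m π.1 x N) then (1:ℝ) else 0)
            + q * W (step m (stseq m π.1 x N) (π.1 (stseq m π.1 x N)))) :=
        mul_le_mul_of_nonneg_left hb hq
      have hstep : stseq m π.1 x (N + 1)
          = step m (stseq m π.1 x N) (π.1 (stseq m π.1 x N)) := rfl
      have htraj : traj m π.1 x N = π.1 (stseq m π.1 x N) := rfl
      rw [hstep, htraj]
      have hite : q ^ N * (if π.1 (stseq m π.1 x N) then (1:ℝ) else 0)
          = (if π.1 (stseq m π.1 x N) then q ^ N else 0) := by split <;> ring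
      calc (∑ j ∈ Finset.range N, (if traj m π.1 x j then q ^ j else 0))
            + q ^ N * W (stseq m π.1 x N)
          ≤ (∑ j ∈ Finset.range N, (if traj m π.1 x j then q ^ j else 0))
            + q ^ N * ((if π.1 (stseq m π.1 x N) then (1:ℝ) else 0)
              + q * W (step m (stseq m π.1 x N) (π.1 (stseq m π.1 x N)))) := by linarith
        _ = _ := by rw [mul_add, ← add_assoc, hite]; ring
  have hlim : Filter.Tendsto
      (fun N : ℕ => pval D m π x q + q ^ N * (1 - q)⁻¹) Filter.atTop
      (nhds (pval D m π x q)) := by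
    have h2 : Filter.Tendsto (fun N : ℕ => q ^ N * (1 - q)⁻¹) Filter.atTop (nhds 0) := by
      simpa using (tendsto_pow_atTop_nhds_zero_of_lt_one h0 h1).mul_const (1 - q)⁻¹
    simpa using (h2.const_add (pval D m π x q))
  refine ge_of_tendsto hlim (Filter.Eventually.of_forall fun N => ?_)
  have hsum : (∑ j ∈ Finset.range N, (if traj m π.1 x j then q ^ j else 0))
      ≤ pval D m π x q :=
    Summable.sum_le_tsum _ (fun j _ => by split <;> positivity) (summable_tv _ h0 h1)
  have hb := hWb (stseq m π.1 x N)
  have hq : (0:ℝ) ≤ q ^ N := by positivity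
  have := hpart N
  nlinarith [mul_le_mul_of_nonneg_left hb hq]

/-- feasible tails are bounded by any Bellman-supersolution `V`. -/
lemma feas_le_bell (V : St m → ℝ) {q : ℝ} (h0 : 0 ≤ q) (h1 : q < 1)
    (hV0 : ∀ y, 0 ≤ V y)
    (hbell : ∀ y b, ok D m y b → (if b then (1:ℝ) else 0) + q * V (step m y b) ≤ V y)
    (s : St m) (g : ℕ → Bool) (hg : Feas D m s g) :
    tv g q ≤ V s := by
  have hpart : ∀ N : ℕ, (∑ j ∈ Finset.range N, (if g j then q ^ j else 0))
      + q ^ N * V (wseq m s g N) ≤ V s := by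
    intro N
    induction N with
    | zero => simp [wseq]
    | succ N ih =>
      refine le_trans ?_ ih
      rw [Finset.sum_range_succ]
      have hb := hbell (wseq m s g N) (g N) (hg N)
      have hq : (0:ℝ) ≤ q ^ N := by positivity
      have hw : wseq m s g (N + 1) = step m (wseq m s g N) (g N) := rfl
      rw [hw]
      have hexp : q ^ N * ((if g N then (1:ℝ) else 0) + q * V (step m (wseq m s g N) (g N)))
          = (if g N then q ^ N else 0) + q ^ (N + 1) * V (step m (wseq m s g N) (g N)) := by
        rw [mul_add, pow_succ]
        have hite : q ^ N * (if g N then (1:ℝ) else 0) = (if g N then q ^ N else 0) := by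
          split <;> ring
        rw [hite]; ring
      linarith [mul_le_mul_of_nonneg_left hb hq, hexp]
  have hlim : Filter.Tendsto
      (fun N : ℕ => V s + q ^ N * (1 - q)⁻¹) Filter.atTop (nhds (V s)) := by
    have h2 : Filter.Tendsto (fun N : ℕ => q ^ N * (1 - q)⁻¹) Filter.atTop (nhds 0) := by
      simpa using (tendsto_pow_atTop_nhds_zero_of_lt_one h0 h1).mul_const (1 - q)⁻¹
    simpa using (h2.const_add (V s))
  refine ge_of_tendsto hlim (Filter.Eventually.of_forall fun N => ?_)
  have hsplit := tv_split g h0 h1 N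
  have htail : tv (fun n => g (N + n)) q ≤ (1 - q)⁻¹ := tv_le _ h0 h1
  have hq : (0:ℝ) ≤ q ^ N := by positivity
  have h2 := hpart N
  have h3 : (0:ℝ) ≤ V (wseq m s g N) := hV0 _
  linarith [mul_le_mul_of_nonneg_left htail hq, mul_nonneg hq h3]

lemma wseq_shift (s : St m) (g : ℕ → Bool) (x y : ℕ) :
    wseq m (wseq m s g x) (fun n => g (x + n)) y = wseq m s g (x + y) := by
  induction y with
  | zero => rfl
  | succ y ih => rw [← Nat.add_assoc]; simp only [wseq, ih]

lemma Feas_shift (s : St m) (g : ℕ → Bool) (hg : Feas D m s g) (x : ℕ) :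
    Feas D m (wseq m s g x) (fun n => g (x + n)) := by
  intro y
  rw [wseq_shift]
  exact hg (x + y)

/-- strict version: a deviation with a strict Bellman gap forces a strict bound. -/
lemma feas_lt_bell (V : St m → ℝ) {q : ℝ} (h0 : 0 < q) (h1 : q < 1)
    (hV0 : ∀ y, 0 ≤ V y)
    (hbell : ∀ y b, ok D m y b → (if b then (1:ℝ) else 0) + q * V (step m y b) ≤ V y)
    (s : St m) (g : ℕ → Bool) (hg : Feas D m s g) (x0 : ℕ)
    (hstrict : (if g x0 then (1:ℝ) else 0)
      + q * V (step m (wseq m s g x0) (g x0)) < V (wseq m s g x0)) :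
    tv g q < V s := by
  have h0' : (0:ℝ) ≤ q := le_of_lt h0
  have hsplit := tv_split g h0' h1 x0
  have hshift : tv (fun n => g (x0 + n)) q
      = (if g x0 then (1:ℝ) else 0) + q * tv (fun n => g ((x0 + 1) + n)) q := by
    rw [tv_shift _ h0' h1]
    have e : (fun n => g (x0 + (1 + n))) = (fun n => g ((x0 + 1) + n)) := by
      funext n; congr 1; omega
    rw [e]
    norm_num
  have htail : tv (fun n => g ((x0 + 1) + n)) q ≤ V (wseq m s g (x0 + 1)) :=
    feas_le_bell D m V h0' h1 hV0 hbell _ _ (Feas_shift D m s g hg (x0 + 1))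
  have hw : wseq m s g (x0 + 1) = step m (wseq m s g x0) (g x0) := rfl
  rw [hw] at htail
  have hmid : tv (fun n => g (x0 + n)) q < V (wseq m s g x0) := by
    calc tv (fun n => g (x0 + n)) q
        = (if g x0 then (1:ℝ) else 0) + q * tv (fun n => g ((x0 + 1) + n)) q := hshift
      _ ≤ (if g x0 then (1:ℝ) else 0) + q * V (step m (wseq m s g x0) (g x0)) := by
          have := mul_le_mul_of_nonneg_left htail h0'
          linarith
      _ < V (wseq m s g x0) := hstrict
  -- now the hpart-sum bound up to x0 plus strictness
  have hpart : ∀ N : ℕ, (∑ j ∈ Finset.range N, (if g j then q ^ j else 0))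
      + q ^ N * V (wseq m s g N) ≤ V s := by
    intro N
    induction N with
    | zero => simp [wseq]
    | succ N ih =>
      refine le_trans ?_ ih
      rw [Finset.sum_range_succ]
      have hb := hbell (wseq m s g N) (g N) (hg N)
      have hq : (0:ℝ) ≤ q ^ N := by positivity
      have hw : wseq m s g (N + 1) = step m (wseq m s g N) (g N) := rfl
      rw [hw]
      have hexp : q ^ N * ((if g N then (1:ℝ) else 0) + q * V (step m (wseq m s g N) (g N)))
          = (if g N then q ^ N else 0) + q ^ (N + 1) * V (step m (wseq m s g N) (g N)) := by
        rw [mul_add, pow_succ]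
        have hite : q ^ N * (if g N then (1:ℝ) else 0) = (if g N then q ^ N else 0) := by
          split <;> ring
        rw [hite]; ring
      linarith [mul_le_mul_of_nonneg_left hb hq, hexp]
  have hq : (0:ℝ) < q ^ x0 := by positivity
  have := hpart x0
  nlinarith [mul_lt_mul_of_pos_left hmid hq]

end Values

section Opt

variable (D : Finset ℕ) (m : ℕ)

noncomputable def gap (π : Pol D m) (s : St m) (b : Bool) (q : ℝ) : ℝ :=
  (if b then (1:ℝ) else 0) + q * pval D m π (step m s b) q - pval D m π s q

lemma exists_numer (π : Pol D m) (s : St m) (b : Bool) :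
    ∃ (p : ℕ) (N : Polynomial ℝ), 1 ≤ p ∧
      ∀ q : ℝ, 0 ≤ q → q < 1 → (1 - q ^ p) * gap D m π s b q = N.eval q := by
  obtain ⟨k1, p1, hp1, hEP1⟩ := traj_EP m π.1 s
  obtain ⟨k2, p2, hp2, hEP2⟩ := traj_EP m π.1 (step m s b)
  set k := max k1 k2 with hk
  set p := p1 * p2 with hp
  have hpge : 1 ≤ p := Nat.one_le_iff_ne_zero.mpr (by positivity)
  have hf1 : EP (traj m π.1 s) k p :=
    EP_mono (by rw [hp, Nat.mul_comm]; exact EP_mul hEP1 p2) (le_max_left _ _)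
  have hf2 : EP (traj m π.1 (step m s b)) k p :=
    EP_mono (EP_mul hEP2 p1) (le_max_right _ _)
  refine ⟨p, Polynomial.C (if b then (1:ℝ) else 0) * (1 - Polynomial.X ^ p)
    + Polynomial.X * pf (traj m π.1 (step m s b)) k p - pf (traj m π.1 s) k p,
    hpge, fun q h0 h1 => ?_⟩
  have e1 := tv_pf (traj m π.1 s) k p hpge hf1 h0 h1
  have e2 := tv_pf (traj m π.1 (step m s b)) k p hpge hf2 h0 h1
  simp only [Polynomial.eval_add, Polynomial.eval_sub, Polynomial.eval_mul, Polynomial.eval_C,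
    Polynomial.eval_one, Polynomial.eval_pow, Polynomial.eval_X]
  rw [gap, pval, pval, ← e1, ← e2]
  ring

lemma eps_avoid (R : Set ℝ) (hR : R.Finite) :
    ∃ ε : ℝ, 0 < ε ∧ ε ≤ 1/2 ∧ ∀ x, 1 - ε < x → x < 1 → x ∉ R := by
  classical
  set Rf := hR.toFinset.filter (· < 1) with hRf
  by_cases h : Rf.Nonempty
  · set M := Rf.max' h with hM
    have hM1 : M < 1 := by
      have h2 := Finset.mem_filter.mp (Rf.max'_mem h)
      exact h2.2
    refine ⟨min (1/2) ((1 - M)/2), lt_min (by norm_num) (by linarith), min_le_left _ _,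
      fun x hx hx1 hxR => ?_⟩
    have hxf : x ∈ Rf := by
      rw [hRf, Finset.mem_filter, Set.Finite.mem_toFinset]
      exact ⟨hxR, hx1⟩
    have hle : x ≤ M := Finset.le_max' _ _ hxf
    have : 1 - (1 - M)/2 ≤ 1 - min (1/2) ((1 - M)/2) := by
      have := min_le_right (1/2 : ℝ) ((1 - M)/2)
      linarith
    linarith
  · refine ⟨1/2, by norm_num, le_refl _, fun x hx hx1 hxR => ?_⟩
    exact h ⟨x, by rw [hRf, Finset.mem_filter, Set.Finite.mem_toFinset]; exact ⟨hxR, hx1⟩⟩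

lemma sign_transfer {f : ℝ → ℝ} (hf : Continuous f) {l : ℝ}
    (hroot : ∀ z, l < z → z < 1 → f z ≠ 0) {x y : ℝ}
    (hx : l < x) (hx1 : x < 1) (hy : l < y) (hy1 : y < 1) (hfx : f x ≤ 0) : f y < 0 := by
  have hfx' : f x < 0 := lt_of_le_of_ne hfx (hroot x hx hx1)
  rcases lt_trichotomy x y with h | h | h
  · by_contra hc
    push_neg at hc
    have hfy : 0 < f y := lt_of_le_of_ne hc (Ne.symm (hroot y hy hy1))
    obtain ⟨z, hz, hz0⟩ := intermediate_value_Ioo (le_of_lt h) hf.continuousOn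
      (Set.mem_Ioo.mpr ⟨hfx', hfy⟩)
    exact hroot z (lt_trans hx hz.1) (lt_trans hz.2 hy1) hz0
  · rw [← h]; exact hfx'
  · by_contra hc
    push_neg at hc
    have hfy : 0 < f y := lt_of_le_of_ne hc (Ne.symm (hroot y hy hy1))
    obtain ⟨z, hz, hz0⟩ := intermediate_value_Ioo' (le_of_lt h) hf.continuousOn
      (Set.mem_Ioo.mpr ⟨hfx', hfy⟩)
    exact hroot z (lt_trans hy hz.1) (lt_trans hz.2 hx1) hz0

lemma gap_dichotomy (π : Pol D m) (s : St m) (b : Bool) :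
    ∃ ε : ℝ, 0 < ε ∧ ε ≤ 1/2 ∧
      ((∀ q : ℝ, 0 ≤ q → q < 1 → gap D m π s b q = 0) ∨
       (∀ x y : ℝ, 1 - ε < x → x < 1 → 1 - ε < y → y < 1 →
          gap D m π s b x ≤ 0 → gap D m π s b y < 0)) := by
  obtain ⟨p, N, hp, hid⟩ := exists_numer D m π s b
  have hfac : ∀ q : ℝ, 0 ≤ q → q < 1 → (0:ℝ) < 1 - q ^ p := by
    intro q h0 h1
    have : q ^ p < 1 := pow_lt_one₀ h0 h1 (by omega)
    linarith
  by_cases hN : N = 0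
  · refine ⟨1/2, by norm_num, le_refl _, Or.inl fun q h0 h1 => ?_⟩
    have := hid q h0 h1
    rw [hN] at this
    simp at this
    rcases this with h | h
    · linarith [hfac q h0 h1]
    · exact h
  · obtain ⟨ε, hε, hε2, havoid⟩ := eps_avoid {x | N.IsRoot x} (Polynomial.finite_setOf_isRoot hN)
    refine ⟨ε, hε, hε2, Or.inr fun x y hx hx1 hy hy1 hgx => ?_⟩
    have hx0 : (0:ℝ) ≤ x := by linarith
    have hy0 : (0:ℝ) ≤ y := by linarith
    have hroot : ∀ z, 1 - ε < z → z < 1 → N.eval z ≠ 0 := fun z hz hz1 =>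
      havoid z hz hz1
    have hNx : N.eval x ≤ 0 := by
      rw [← hid x hx0 hx1]
      have := hfac x hx0 hx1
      nlinarith
    have hNy : N.eval y < 0 := sign_transfer (Polynomial.continuous_aeval N) hroot hx hx1 hy hy1 hNx
    have := hid y hy0 hy1
    have hf := hfac y hy0 hy1
    nlinarith
  
lemma exists_opt : ∃ (ε : ℝ) (πs : Pol D m), 0 < ε ∧ ε ≤ 1/2 ∧
    (∀ q : ℝ, 1 - ε < q → q < 1 → ∀ s b, ok D m s b → gap D m πs s b q ≤ 0) ∧
    (∀ q : ℝ, 1 - ε < q → q < 1 → ∀ s b, ok D m s b → b ≠ πs.1 s → gap D m πs s b q < 0) := by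
  classical
  -- choose per-triple epsilons
  have hsel : ∀ τ : Pol D m × St m × Bool, ∃ ε : ℝ, 0 < ε ∧ ε ≤ 1/2 ∧
      ((∀ q : ℝ, 0 ≤ q → q < 1 → gap D m τ.1 τ.2.1 τ.2.2 q = 0) ∨
       (∀ x y : ℝ, 1 - ε < x → x < 1 → 1 - ε < y → y < 1 →
          gap D m τ.1 τ.2.1 τ.2.2 x ≤ 0 → gap D m τ.1 τ.2.1 τ.2.2 y < 0)) :=
    fun τ => gap_dichotomy D m τ.1 τ.2.1 τ.2.2
  choose εsel hsel1 hsel2 hsel3 using hsel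
  set ε := Finset.univ.inf' (Finset.univ_nonempty) εsel with hε
  have hεpos : 0 < ε := by
    rw [hε, Finset.lt_inf'_iff]
    exact fun τ _ => hsel1 τ
  have hεle : ∀ τ, ε ≤ εsel τ := fun τ => Finset.inf'_le _ (Finset.mem_univ τ)
  have hε2 : ε ≤ 1/2 := le_trans (hεle (Classical.arbitrary _)) (hsel2 _)
  set qb := 1 - ε/2 with hqb
  have hqb0 : (0:ℝ) ≤ qb := by rw [hqb]; linarith
  have hqb1 : qb < 1 := by rw [hqb]; linarith
  have hqbI : 1 - ε < qb := by rw [hqb]; linarith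
  -- choose the optimal policy at qb
  obtain ⟨πs, _, hπs⟩ := Finset.exists_max_image Finset.univ
    (fun π : Pol D m => ∑ s : St m, pval D m π s qb) Finset.univ_nonempty
  -- optimality at qb
  have hopt : ∀ s b, ok D m s b → gap D m πs s b qb ≤ 0 := by
    intro s b hok
    by_contra hc
    push_neg at hc
    set π' : Pol D m := ⟨Function.update πs.1 s b, by
      intro y
      rcases eq_or_ne y s with rfl | hne
      · rw [Function.update_self]; exact hok
      · rw [Function.update_of_ne hne]; exact πs.2 y⟩ with hπ'
    have hW : ∀ y, pval D m πs y qb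
        ≤ (if π'.1 y then (1:ℝ) else 0) + qb * pval D m πs (step m y (π'.1 y)) qb := by
      intro y
      rcases eq_or_ne y s with rfl | hne
      · have : π'.1 y = b := Function.update_self _ _ _
        rw [this]
        rw [gap] at hc
        linarith
      · have : π'.1 y = πs.1 y := Function.update_of_ne hne _ _
        rw [this]
        exact le_of_eq (pval_rec D m πs y hqb0 hqb1)
    have hge := pval_ge_of_onestep D m π' (fun y => pval D m πs y qb) hqb0 hqb1
      (fun y => pval_le D m πs y hqb0 hqb1) hW
    have hstrict : pval D m πs s qb < pval D m π' s qb := by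
      have h1' : pval D m π' s qb
          = (if π'.1 s then (1:ℝ) else 0) + qb * pval D m π' (step m s (π'.1 s)) qb :=
        pval_rec D m π' s hqb0 hqb1
      have hb : π'.1 s = b := Function.update_self _ _ _
      rw [hb] at h1'
      have h2' : pval D m πs (step m s b) qb ≤ pval D m π' (step m s b) qb := hge _
      rw [gap] at hc
      nlinarith
    have hsum : (∑ s : St m, pval D m πs s qb) < ∑ s : St m, pval D m π' s qb :=
      Finset.sum_lt_sum (fun y _ => hge y) ⟨s, Finset.mem_univ s, hstrict⟩
    exact absurd (hπs π' (Finset.mem_univ π')) (not_le.mpr hsum)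
  refine ⟨ε, πs, hεpos, hε2, ?_, ?_⟩
  · intro q hq hq1 s b hok
    have hq0 : (0:ℝ) ≤ q := by linarith
    rcases hsel3 (πs, s, b) with h | h
    · exact le_of_eq (h q hq0 hq1)
    · exact le_of_lt (h qb q (lt_of_le_of_lt (by linarith [hεle (πs, s, b)]) hqbI) hqb1
        (lt_of_le_of_lt (by linarith [hεle (πs, s, b)]) hq) hq1 (hopt s b hok))
  · intro q hq hq1 s b hok hbne
    rcases hsel3 (πs, s, b) with h | h
    · -- tie case: two distinct optimal tails with identical values, contradiction
      exfalso
      set f1 := traj m πs.1 s with hf1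
      set f2 : ℕ → Bool := fun n => if n = 0 then b else traj m πs.1 (step m s b) (n - 1)
        with hf2
      obtain ⟨k1, p1, hp1, hEP1⟩ := traj_EP m πs.1 s
      obtain ⟨k2, p2, hp2, hEP2⟩ := traj_EP m πs.1 (step m s b)
      have hEPf2 : EP f2 (k2 + 1) p2 := by
        intro n hn
        rw [hf2]
        simp only
        rw [if_neg (by omega), if_neg (by omega)]
        have : n + p2 - 1 = (n - 1) + p2 := by omega
        rw [this, hEP2 (n - 1) (by omega)]
      have heq : ∀ q : ℝ, (1:ℝ)/2 < q → q < 1 → tv f1 q = tv f2 q := by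
        intro q hq' hq1'
        have hq0' : (0:ℝ) ≤ q := by linarith
        have hshift2 : tv f2 q = (if b then (1:ℝ) else 0)
            + q * tv (traj m πs.1 (step m s b)) q := by
          rw [tv_shift _ hq0' hq1']
          have e : (fun n => f2 (1 + n)) = traj m πs.1 (step m s b) := by
            funext n
            rw [hf2]
            simp only
            rw [if_neg (by omega)]
            congr 1
            omega
          rw [e, hf2]
          simp
        have hgap := h q hq0' hq1'
        rw [gap] at hgap
        rw [hshift2, hf1]
        rw [pval, pval] at hgap
        linarith
      have : f1 = f2 := tv_inj hp1 hp2 hEP1 hEPf2 (by norm_num : (1:ℝ)/2 < 1)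
        (by norm_num) heq
      have h0 : f1 0 = πs.1 s := rfl
      have h0' : f2 0 = b := by simp [hf2]
      rw [this, h0'] at h0
      exact hbne h0.symm.symm
    · exact h qb q (lt_of_le_of_lt (by linarith [hεle (πs, s, b)]) hqbI) hqb1
        (lt_of_le_of_lt (by linarith [hεle (πs, s, b)]) hq) hq1 (hopt s b hok)

end Opt

section Main

noncomputable def chi (S : Set ℕ) : ℕ → Bool :=
  fun n => @decide (n ∈ S) (Classical.propDecidable _)

lemma chi_iff (S : Set ℕ) (n : ℕ) : chi S n = true ↔ n ∈ S := by
  unfold chi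
  constructor
  · exact @of_decide_eq_true _ (Classical.propDecidable _)
  · intro h
    exact @decide_eq_true _ (Classical.propDecidable _) h

lemma genFun_eq_tv (S : Set ℕ) (q : ℝ) : genFun S q = tv (chi S) q := by
  classical
  rw [genFun, tv, tsum_subtype S (fun n => q ^ n)]
  congr 1
  funext n
  rw [Set.indicator_apply]
  by_cases h : n ∈ S
  · rw [if_pos h, if_pos ((chi_iff S n).mpr h)]
  · rw [if_neg h, if_neg (fun hc => h ((chi_iff S n).mp hc))]

theorem stmt_17' (D : Finset ℕ) (hDpos : ∀ d ∈ D, 0 < d)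
    (S : Set ℕ) (hS : DAvoiding D S)
    (hmax : ∀ S' : Set ℕ, DAvoiding D S' → ¬ germLT S S') :
    EventuallyPeriodic S := by
  classical
  rcases Finset.eq_empty_or_nonempty D with rfl | hne
  · -- D empty: S must be all of ℕ
    have hall : ∀ n, n ∈ S := by
      by_contra hc
      push_neg at hc
      obtain ⟨n, hn⟩ := hc
      refine hmax Set.univ (fun a _ b _ _ => Finset.notMem_empty _) ⟨1/2, by norm_num,
        fun q hq hq1 => ?_⟩
      have hq0 : (0:ℝ) ≤ q := by linarith
      have hqpos : (0:ℝ) < q := by linarith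
      rw [genFun_eq_tv, genFun_eq_tv]
      have huniv : chi Set.univ = fun _ => true := by
        funext k; rw [chi_iff]; trivial
      rw [huniv, tv, tv]
      refine Summable.tsum_lt_tsum (i := n) (fun k => ?_) ?_ (summable_tv _ hq0 hq1)
        (summable_tv _ hq0 hq1)
      · simp only
        split
        · split
          · exact le_refl _
          · simp at *
        · split
          · exact pow_nonneg hq0 _
          · exact le_refl _
      · have hchin : chi S n = false := by
          rw [← Bool.not_eq_true, chi_iff]; exact hn
        rw [hchin]
        simp only [Bool.false_eq_true, if_false, if_pos rfl]
        exact pow_pos hqpos n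
    exact ⟨0, 1, le_refl 1, fun n _ => iff_of_true (hall n) (hall (n + 1))⟩
  · set m := D.max' hne with hm
    have hm1 : 1 ≤ m := by
      obtain ⟨d, hd⟩ := hne
      exact le_trans (hDpos d hd) (Finset.le_max' D d hd)
    have hdm : ∀ d ∈ D, d ≤ m := fun d hd => Finset.le_max' D d hd
    obtain ⟨ε, πs, hεpos, hε2, hB1, hB2⟩ := exists_opt D m
    set s0 : St m := win m (chi S) m with hs0
    set g0 : ℕ → Bool := fun x => chi S (m + x) with hg0
    set gstar : ℕ → Bool := traj m πs.1 s0 with hgstar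
    -- windows of S's tail
    have hwseq0 : ∀ x, wseq m s0 g0 x = win m (chi S) (m + x) := by
      intro x
      induction x with
      | zero => rfl
      | succ x ih =>
        show step m (wseq m s0 g0 x) (g0 x) = _
        have hgx : g0 x = chi S (m + x) := rfl
        rw [ih, hgx, ← win_step m (chi S) (m + x) (Nat.le_add_right m x)]
        rfl
    -- S's tail is feasible
    have hFeas0 : Feas D m s0 g0 := by
      intro x
      intro hb i hiD
      rw [hwseq0]
      by_contra hcon
      have htrue : win m (chi S) (m + x) i = true := by
        cases hval : win m (chi S) (m + x) i
        · exact absurd hval hcon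
        · rfl
      have ha : (m + x) - ((i:ℕ) + 1) ∈ S := (chi_iff S _).mp htrue
      have hb' : m + x ∈ S := (chi_iff S _).mp hb
      have hi1 : (i:ℕ) + 1 ≤ m := i.2
      have hlt : (m + x) - ((i:ℕ) + 1) < m + x := by omega
      have := hS _ ha _ hb' hlt
      have hsub : (m + x) - ((m + x) - ((i:ℕ) + 1)) = (i:ℕ) + 1 := by omega
      rw [hsub] at this
      exact this hiD
    -- the spliced competitor
    set comb : ℕ → Bool := fun n => if n < m then chi S n else gstar (n - m) with hcomb
    set S' : Set ℕ := {n | comb n = true} with hS'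
    have hFeasStar : Feas D m s0 gstar := Feas_traj D m πs.1 πs.2 s0
    have hwin' : ∀ x, wseq m s0 gstar x = win m comb (m + x) := by
      intro x
      induction x with
      | zero =>
        show s0 = _
        funext i
        rw [hs0, win, win]
        have h1 : m - ((i:ℕ) + 1) < m := by
          have := i.2; omega
        rw [hcomb]
        simp only [Nat.add_zero]
        rw [if_pos h1]
      | succ x ih =>
        show step m (wseq m s0 gstar x) (gstar x) = _
        have hgx : gstar x = comb (m + x) := by
          rw [hcomb]
          simp only
          rw [if_neg (by omega)]
          congr 1
          omega
        rw [ih, hgx, ← win_step m comb (m + x) (Nat.le_add_right m x)]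
        rfl
    have havoid' : DAvoiding D S' := by
      intro a ha b hb hab hmem
      have hd1 : 1 ≤ b - a := hDpos _ hmem
      have hdm' : b - a ≤ m := hdm _ hmem
      rcases lt_or_ge b m with hbm | hbm
      · have ham : a < m := lt_trans hab hbm
        have haS : a ∈ S := (chi_iff S a).mp (by
          have := ha
          rw [hS', Set.mem_setOf_eq, hcomb] at this
          simpa [if_pos ham] using this)
        have hbS : b ∈ S := (chi_iff S b).mp (by
          have := hb
          rw [hS', Set.mem_setOf_eq, hcomb] at this
          simpa [if_pos hbm] using this)
        exact hS _ haS _ hbS hab hmem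
      · set x := b - m with hx
        have hgx : gstar x = true := by
          have := hb
          rw [hS', Set.mem_setOf_eq, hcomb] at this
          simpa [if_neg (not_lt.mpr hbm)] using this
        have hok := hFeasStar x hgx
        set i : Fin m := ⟨b - a - 1, by omega⟩ with hi
        have hiD : ((i:ℕ) + 1) ∈ D := by
          have : (i:ℕ) + 1 = b - a := by rw [hi]; simp; omega
          rw [this]; exact hmem
        have hfalse := hok i hiD
        rw [hwin'] at hfalse
        have hmx : m + x = b := by omega
        rw [hmx] at hfalse
        have hba : b - ((i:ℕ) + 1) = a := by rw [hi]; simp; omega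
        have : comb a = true := ha
        rw [win, hba] at hfalse
        rw [this] at hfalse
        exact Bool.true_eq_false.mp hfalse
    -- apply maximality
    have hnot := hmax S' havoid'
    rw [germLT] at hnot
    push_neg at hnot
    obtain ⟨q0, hq0a, hq0b, hq0c⟩ := hnot ε hεpos
    have hq00 : (0:ℝ) < q0 := by linarith
    have hq00' : (0:ℝ) ≤ q0 := le_of_lt hq00
    -- generating function comparison
    have hgenS : genFun S q0 = (∑ x ∈ Finset.range m, (if chi S x then q0 ^ x else 0))
        + q0 ^ m * tv g0 q0 := by
      rw [genFun_eq_tv, tv_split (chi S) hq00' hq0b m, hg0]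
    have hgenS' : genFun S' q0 = (∑ x ∈ Finset.range m, (if chi S x then q0 ^ x else 0))
        + q0 ^ m * tv gstar q0 := by
      rw [genFun_eq_tv, tv_split (chi S') hq00' hq0b m]
      have hhead : ∀ x ∈ Finset.range m, (if chi S' x then q0 ^ x else (0:ℝ))
          = (if chi S x then q0 ^ x else 0) := by
        intro x hx
        have hxm : x < m := Finset.mem_range.mp hx
        have : chi S' x = chi S x := by
          cases hv : chi S x
          · rw [← Bool.not_eq_true, chi_iff, hS', Set.mem_setOf_eq, hcomb]
            simp only [if_pos hxm]
            rw [← Bool.not_eq_true] at hv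
            intro hcc
            exact hv hcc
          · rw [chi_iff, hS', Set.mem_setOf_eq, hcomb]
            simp only [if_pos hxm]
            exact hv
        rw [this]
      rw [Finset.sum_congr rfl hhead]
      have hfun : (fun n => chi S' (m + n)) = gstar := by
        funext n
        cases hv : gstar n
        · rw [← Bool.not_eq_true, chi_iff, hS', Set.mem_setOf_eq, hcomb]
          simp only [if_neg (by omega : ¬ m + n < m)]
          have he : m + n - m = n := by omega
          rw [he, hv]
          simp
        · rw [chi_iff, hS', Set.mem_setOf_eq, hcomb]
          simp only [if_neg (by omega : ¬ m + n < m)]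
          have he : m + n - m = n := by omega
          rw [he, hv]
      rw [hfun]
    -- Bellman supersolution at q0
    set V : St m → ℝ := fun y => pval D m πs y q0 with hV
    have hbell : ∀ y b, ok D m y b → (if b then (1:ℝ) else 0) + q0 * V (step m y b) ≤ V y := by
      intro y b hok
      have := hB1 q0 hq0a hq0b y b hok
      rw [gap] at this
      rw [hV]
      linarith
    have hV0 : ∀ y, 0 ≤ V y := fun y => pval_nonneg D m πs y hq00'
    have hle := feas_le_bell D m V hq00' hq0b hV0 hbell s0 g0 hFeas0
    have hgecomp : tv gstar q0 ≤ tv g0 q0 := by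
      rw [hgenS, hgenS'] at hq0c
      have hpow : (0:ℝ) < q0 ^ m := by positivity
      have h2 : q0 ^ m * tv gstar q0 ≤ q0 ^ m * tv g0 q0 := by linarith
      exact (mul_le_mul_iff_right₀ hpow).mp h2
    have heq : tv g0 q0 = V s0 := by
      refine le_antisymm hle ?_
      have hVe : V s0 = tv gstar q0 := rfl
      rw [hVe]
      exact hgecomp
    -- no deviation from the optimal policy
    have hfollow : ∀ x, g0 x = πs.1 (wseq m s0 g0 x) := by
      by_contra hc
      push_neg at hc
      obtain ⟨x0, hx0⟩ := hc
      have hstrict : (if g0 x0 then (1:ℝ) else 0)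
          + q0 * V (step m (wseq m s0 g0 x0) (g0 x0)) < V (wseq m s0 g0 x0) := by
        have := hB2 q0 hq0a hq0b (wseq m s0 g0 x0) (g0 x0) (hFeas0 x0) hx0
        rw [gap] at this
        rw [hV]
        linarith
      have := feas_lt_bell D m V hq00 hq0b hV0 hbell s0 g0 hFeas0 x0 hstrict
      rw [heq] at this
      exact lt_irrefl _ this
    -- hence the tail equals the policy trajectory
    have htraj : ∀ x, wseq m s0 g0 x = stseq m πs.1 s0 x ∧ g0 x = traj m πs.1 s0 x := by
      intro x
      induction x with
      | zero => exact ⟨rfl, by rw [traj]; exact hfollow 0⟩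
      | succ x ih =>
        constructor
        · show step m (wseq m s0 g0 x) (g0 x) = _
          rw [ih.1, ih.2]
          rfl
        · rw [traj, ← (by
            show step m (wseq m s0 g0 x) (g0 x) = _
            rw [ih.1, ih.2]; rfl : wseq m s0 g0 (x+1) = stseq m πs.1 s0 (x+1))]
          exact hfollow (x + 1)
    -- eventual periodicity
    obtain ⟨k, p, hp, hEP⟩ := traj_EP m πs.1 s0
    refine ⟨m + k, p, hp, fun n hn => ?_⟩
    have hmem : ∀ j, m ≤ j → (j ∈ S ↔ traj m πs.1 s0 (j - m) = true) := by
      intro j hj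
      rw [← chi_iff]
      have : chi S j = g0 (j - m) := by rw [hg0]; congr 1; omega
      rw [this, (htraj (j - m)).2]
    rw [hmem n (by omega), hmem (n + p) (by omega)]
    have h1 : n + p - m = (n - m) + p := by omega
    rw [h1, hEP (n - m) (by omega)]

end Main
end Stmt17


/-- Every germ-maximal `D`-avoiding set (no `D`-avoiding set strictly
dominates it) is eventually periodic. -/
theorem stmt_17 (D : Finset ℕ) (hDpos : ∀ d ∈ D, 0 < d)
    (S : Set ℕ) (hS : DAvoiding D S)
    (hmax : ∀ S' : Set ℕ, DAvoiding D S' → ¬ germLT S S') :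
    EventuallyPeriodic S :=
  Stmt17.stmt_17' D hDpos S hS hmax
end

section
/- Convergence of local improvements: let D be a finite subset of ℕ, ℓ ≥ max(D), and let w⁽⁰⁾, w⁽¹⁾, w⁽²⁾, ... be an infinite sequence of binary sequences (elements of {0,1}^ℕ) such that each w⁽ⁱ⁺¹⁾ is obtained from w⁽ⁱ⁾ by replacing a block of ℓ consecutive bits with a (for the boundary conditions) germ-maximal legal block, so that in particular the difference of the associated power series is of the form q^t·p(q) with p a polynomial of degree < ℓ with coefficients in {−1,0,1} satisfying p ⪰ 0 in germ order at 1⁻. Then the sequence w⁽ⁱ⁾ converges pointwise: for every position t, w⁽ⁱ⁾_t is eventually constant in i. -/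
open Polynomial

private lemma summable_gf (a : ℕ → Bool) {q : ℝ} (h0 : 0 ≤ q) (h1 : q < 1) :
    Summable (fun n => if a n then q ^ n else 0) := by
  refine Summable.of_nonneg_of_le (fun n => ?_) (fun n => ?_)
    (summable_geometric_of_lt_one h0 h1)
  · split
    · exact pow_nonneg h0 n
    · exact le_rfl
  · split
    · exact le_rfl
    · exact pow_nonneg h0 n

private lemma gf_nonneg (a : ℕ → Bool) {q : ℝ} (h0 : 0 ≤ q) :
    0 ≤ ∑' n : ℕ, (if a n then q ^ n else 0) := by
  refine tsum_nonneg fun n => ?_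
  split
  · exact pow_nonneg h0 n
  · exact le_rfl

private lemma gf_le (a : ℕ → Bool) {q : ℝ} (h0 : 0 ≤ q) (h1 : q < 1) :
    (∑' n : ℕ, (if a n then q ^ n else 0)) ≤ (1 - q)⁻¹ := by
  rw [← tsum_geometric_of_lt_one h0 h1]
  refine Summable.tsum_le_tsum (fun n => ?_) (summable_gf a h0 h1)
    (summable_geometric_of_lt_one h0 h1)
  split
  · exact le_rfl
  · exact pow_nonneg h0 n

/-- Two binary sequences with the same generating function are equal. -/
private lemma eq_of_diff_zero (a b : ℕ → Bool)
    (h : ∀ q : ℝ, 0 ≤ q → q < 1 →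
      (∑' n : ℕ, (if a n then q ^ n else 0)) - (∑' n : ℕ, (if b n then q ^ n else 0)) = 0) :
    ∀ n, a n = b n := by
  by_contra hne
  push_neg at hne
  obtain ⟨m, hm⟩ := hne
  have hexists : ∃ n, a n ≠ b n := ⟨m, hm⟩
  classical
  set n0 := Nat.find hexists with hn0def
  have hn0 : a n0 ≠ b n0 := Nat.find_spec hexists
  have hmin : ∀ k < n0, a k = b k := fun k hk => by
    by_contra hk'
    exact Nat.find_min hexists hk hk'
  set q : ℝ := 1/3 with hqdef
  have hq0 : (0:ℝ) ≤ q := by norm_num [hqdef]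
  have hq1 : q < 1 := by norm_num [hqdef]
  have hsa := summable_gf a hq0 hq1
  have hsb := summable_gf b hq0 hq1
  set c : ℕ → ℝ := fun n => (if a n then q ^ n else 0) - (if b n then q ^ n else 0) with hcdef
  have hsc : Summable c := hsa.sub hsb
  have htsum : ∑' n, c n = 0 := by
    rw [Summable.tsum_sub hsa hsb]; exact h q hq0 hq1
  have habs : ∀ n, |c n| ≤ q ^ n := by
    intro n
    have hqn : (0:ℝ) ≤ q ^ n := pow_nonneg hq0 n
    simp only [hcdef]
    split <;> split <;> simp [abs_of_nonneg, abs_of_nonpos, hqn, neg_nonpos]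
  have hsplit := Summable.tsum_eq_add_tsum_ite hsc n0
  set g : ℕ → ℝ := fun n => if n = n0 then 0 else c n with hgdef
  -- bound |g n| by the tail geometric series
  set hfun : ℕ → ℝ := fun n => if n ≤ n0 then 0 else q ^ n with hhdef
  have hgh : ∀ n, |g n| ≤ hfun n := by
    intro n
    simp only [hgdef, hhdef]
    rcases lt_trichotomy n n0 with hlt | heq | hgt
    · have : c n = 0 := by simp [hcdef, hmin n hlt]
      simp [Nat.ne_of_lt hlt, this, hlt.le]
    · simp [heq]
    · have h1 : ¬ (n = n0) := Nat.ne_of_gt hgt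
      have h2 : ¬ (n ≤ n0) := not_le.mpr hgt
      simp only [h1, h2, if_neg, if_false]
      exact habs n
  have hsh : Summable hfun := by
    refine Summable.of_nonneg_of_le (fun n => ?_) (fun n => ?_)
      (summable_geometric_of_lt_one hq0 hq1)
    · simp only [hhdef]; split
      · exact le_rfl
      · exact pow_nonneg hq0 _
    · simp only [hhdef]; split
      · exact pow_nonneg hq0 _
      · exact le_rfl
  have hsg : Summable (fun n => |g n|) :=
    Summable.of_nonneg_of_le (fun n => abs_nonneg _) hgh hsh
  have htail : ∑' n, hfun n = q ^ (n0 + 1) * (1 - q)⁻¹ := by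
    have hsum := Summable.sum_add_tsum_nat_add (f := hfun) (n0 + 1) hsh
    have hz : ∑ i ∈ Finset.range (n0 + 1), hfun i = 0 := by
      refine Finset.sum_eq_zero fun i hi => ?_
      have : i ≤ n0 := by
        have := Finset.mem_range.mp hi; omega
      simp [hhdef, this]
    have hshift : ∀ i : ℕ, hfun (i + (n0 + 1)) = q ^ (n0 + 1) * q ^ i := by
      intro i
      have : ¬ (i + (n0 + 1) ≤ n0) := by omega
      simp [hhdef, this, pow_add, mul_comm]
    rw [hz, zero_add] at hsum
    rw [← hsum]
    simp_rw [hshift]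
    rw [tsum_mul_left, tsum_geometric_of_lt_one hq0 hq1]
  have hbound : |∑' n, g n| ≤ q ^ (n0 + 1) * (1 - q)⁻¹ := by
    calc |∑' n, g n| ≤ ∑' n, |g n| := by
          simpa [Real.norm_eq_abs] using norm_tsum_le_tsum_norm (f := g) (by simpa [Real.norm_eq_abs] using hsg)
      _ ≤ ∑' n, hfun n := Summable.tsum_le_tsum hgh hsg hsh
      _ = q ^ (n0 + 1) * (1 - q)⁻¹ := htail
  have hcn0 : |c n0| = q ^ n0 := by
    have hqn : (0:ℝ) ≤ q ^ n0 := pow_nonneg hq0 n0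
    show |(if a n0 = true then q ^ n0 else 0) - (if b n0 = true then q ^ n0 else 0)| = q ^ n0
    cases ha : a n0 <;> cases hb : b n0
    · rw [ha, hb] at hn0; exact absurd rfl hn0
    · simp [abs_of_nonneg hqn]
    · simp [abs_of_nonneg hqn]
    · rw [ha, hb] at hn0; exact absurd rfl hn0
  have hceq : c n0 = - ∑' n, g n := by
    have := hsplit
    rw [htsum] at this
    linarith [this]
  have hfinal : q ^ n0 ≤ q ^ (n0 + 1) * (1 - q)⁻¹ := by
    rw [← hcn0, hceq, abs_neg]
    exact hbound
  have hqn : (0:ℝ) < q ^ n0 := pow_pos (by norm_num [hqdef]) n0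
  have : q ^ (n0 + 1) * (1 - q)⁻¹ = q ^ n0 / 2 := by
    rw [pow_succ]
    rw [hqdef]
    norm_num
    ring
  rw [this] at hfinal
  linarith

/-- Convergence of local improvements. -/
theorem stmt_19 (D : Finset ℕ) (ℓ : ℕ) (hℓ : 0 < ℓ) (hℓD : ∀ d ∈ D, d ≤ ℓ)
    (w : ℕ → ℕ → Bool)
    (h0 : DAvoiding D {n : ℕ | w 0 n = true})
    (hstep : ∀ i : ℕ, ∃ (t : ℕ) (p : Polynomial ℝ),
      p.degree < (ℓ : WithBot ℕ) ∧
      (∀ n, p.coeff n = -1 ∨ p.coeff n = 0 ∨ p.coeff n = 1) ∧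
      (∀ q : ℝ, 0 ≤ q → q < 1 →
        (∑' n : ℕ, (if w (i + 1) n then q ^ n else 0)) -
          (∑' n : ℕ, (if w i n then q ^ n else 0)) = q ^ t * p.eval q) ∧
      (∃ ε > (0 : ℝ), ∀ q : ℝ, 1 - ε < q → q < 1 → 0 ≤ p.eval q) ∧
      (p ≠ 0 → (∀ t' < t, w i t' = w (i + 1) t') ∧ w i t ≠ w (i + 1) t)) :
    ∀ t : ℕ, ∃ N : ℕ, ∀ i ≥ N, w i t = w N t := by
  classical
  choose ts ps hdeg hcoeff hg hpos hpref using hstep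
  -- encode the coefficients of the polynomials into a finite type
  set enc : ℕ → Fin ℓ → Fin 3 := fun i k =>
    if (ps i).coeff k = -1 then 0 else if (ps i).coeff k = 0 then 1 else 2 with hencdef
  have henc : ∀ i j, enc i = enc j → ps i = ps j := by
    intro i j hij
    ext n
    by_cases hn : n < ℓ
    · have h1 := hcoeff i n
      have h2 := hcoeff j n
      have hfun := congrFun hij ⟨n, hn⟩
      simp only [hencdef] at hfun
      rcases h1 with h1 | h1 | h1 <;> rcases h2 with h2 | h2 | h2 <;>
        rw [h1, h2] <;> first
          | rfl
          | (exfalso; rw [h1, h2] at hfun; norm_num at hfun; try exact absurd hfun (by decide))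
    · have hn' : (ℓ : WithBot ℕ) ≤ (n : WithBot ℕ) := by
        exact_mod_cast Nat.le_of_not_lt hn
      rw [Polynomial.coeff_eq_zero_of_degree_lt (lt_of_lt_of_le (hdeg i) hn'),
        Polynomial.coeff_eq_zero_of_degree_lt (lt_of_lt_of_le (hdeg j) hn')]
  -- a uniform ε for positivity near 1
  set εf : (Fin ℓ → Fin 3) → ℝ := fun c =>
    if h : ∃ i, enc i = c then (hpos h.choose).choose else 1 with hεfdef
  have hεf_pos : ∀ c, 0 < εf c := by
    intro c
    simp only [hεfdef]
    split
    · exact (hpos _).choose_spec.1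
    · norm_num
  have hεf_spec : ∀ i, ∀ q : ℝ, 1 - εf (enc i) < q → q < 1 → 0 ≤ (ps i).eval q := by
    intro i q hq1 hq2
    have hex : ∃ j, enc j = enc i := ⟨i, rfl⟩
    have hps : ps hex.choose = ps i := henc _ _ hex.choose_spec
    rw [← hps]
    refine (hpos hex.choose).choose_spec.2 q ?_ hq2
    have : εf (enc i) = (hpos hex.choose).choose := by
      simp only [hεfdef, dif_pos hex]
    rwa [this] at hq1
  obtain ⟨ε₀, hε₀pos, hε₀le⟩ : ∃ ε₀ > 0, ∀ c, ε₀ ≤ εf c := by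
    refine ⟨Finset.univ.inf' ⟨fun _ => 0, Finset.mem_univ _⟩ εf, ?_, ?_⟩
    · exact (Finset.lt_inf'_iff _).2 fun c _ => hεf_pos c
    · exact fun c => Finset.inf'_le _ (Finset.mem_univ c)
  have hposall : ∀ i, ∀ q : ℝ, 1 - ε₀ < q → q < 1 → 0 ≤ (ps i).eval q := by
    intro i q hq1 hq2
    refine hεf_spec i q ?_ hq2
    have := hε₀le (enc i)
    linarith
  -- main finiteness claim
  have key : ∀ T : ℕ, {i | ps i ≠ 0 ∧ ts i ≤ T}.Finite := by
    intro T
    by_contra hfin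
    have hinf : {i | ps i ≠ 0 ∧ ts i ≤ T}.Infinite := hfin
    set B := {i | ps i ≠ 0 ∧ ts i ≤ T} with hBdef
    haveI : Infinite ↥B := hinf.to_subtype
    set F : ℕ → Fin (T + 1) × (Fin ℓ → Fin 3) :=
      fun i => (⟨min (ts i) T, by omega⟩, enc i) with hFdef
    obtain ⟨y, hy⟩ := Finite.exists_infinite_fiber (fun i : ↥B => F i)
    set B' : Set ℕ := {i | i ∈ B ∧ F i = y} with hB'def
    have hB' : B'.Infinite := by
      haveI := hy
      refine Set.infinite_of_injective_forall_mem
        (f := fun x : ↥((fun i : ↥B => F ↑i) ⁻¹' {y}) => (x.1 : ℕ)) ?_ ?_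
      · exact Subtype.val_injective.comp Subtype.val_injective
      · intro x
        exact ⟨x.1.2, x.2⟩
    obtain ⟨i₀, hi₀⟩ := hB'.nonempty
    have hB'same : ∀ i ∈ B', ps i = ps i₀ ∧ ts i = ts i₀ := by
      intro i hi
      have h1 : F i = F i₀ := hi.2.trans hi₀.2.symm
      have henc' : enc i = enc i₀ := congrArg Prod.snd h1
      have hts : min (ts i) T = min (ts i₀) T := by
        have := congrArg Prod.fst h1
        simpa using congrArg Fin.val this
      have hi' : ts i ≤ T := hi.1.2
      have hi₀' : ts i₀ ≤ T := hi₀.1.2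
      rw [min_eq_left hi', min_eq_left hi₀'] at hts
      exact ⟨henc _ _ henc', hts⟩
    have hpne : ps i₀ ≠ 0 := hi₀.1.1
    -- choose q near 1 avoiding the roots of ps i₀
    have hroots : {x : ℝ | (ps i₀).IsRoot x}.Finite := Polynomial.finite_setOf_isRoot hpne
    have hIoo : (Set.Ioo (max (1 - ε₀) (1/2)) 1).Infinite := by
      rw [← Set.infinite_coe_iff]
      exact Set.Ioo.infinite (by
        rcases le_total (1 - ε₀) (1/2) with h | h
        · rw [max_eq_right h]; norm_num
        · rw [max_eq_left h]; linarith)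
    obtain ⟨q, hqmem, hqroot⟩ := (hIoo.diff hroots).nonempty
    have hq1 : q < 1 := hqmem.2
    have hqhalf : (1:ℝ)/2 < q := lt_of_le_of_lt (le_max_right _ _) hqmem.1
    have hqε : 1 - ε₀ < q := lt_of_le_of_lt (le_max_left _ _) hqmem.1
    have hq0 : (0:ℝ) ≤ q := by linarith
    have hpq : 0 < (ps i₀).eval q := by
      refine lt_of_le_of_ne (hposall i₀ q hqε hq1) ?_
      intro hc
      exact hqroot hc.symm
    set δ : ℝ := q ^ ts i₀ * (ps i₀).eval q with hδdef
    have hδpos : 0 < δ := mul_pos (pow_pos (by linarith) _) hpq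
    set G : ℕ → ℝ := fun i => ∑' n : ℕ, (if w i n then q ^ n else 0) with hGdef
    have hGstep : ∀ i, G (i + 1) - G i = q ^ ts i * (ps i).eval q := fun i => hg i q hq0 hq1
    have hGmono : ∀ i, 0 ≤ G (i + 1) - G i := by
      intro i
      rw [hGstep i]
      exact mul_nonneg (pow_nonneg hq0 _) (hposall i q hqε hq1)
    have hGdelta : ∀ i ∈ B', G (i + 1) - G i = δ := by
      intro i hi
      rw [hGstep i, (hB'same i hi).1, (hB'same i hi).2]
    obtain ⟨k, hk⟩ := exists_nat_gt ((1 - q)⁻¹ / δ)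
    have hkδ : (1 - q)⁻¹ < k * δ := by
      rw [div_lt_iff₀ hδpos] at hk
      exact hk
    obtain ⟨s, hsub, hcard⟩ := hB'.exists_subset_card_eq k
    set N := s.sup id + 1 with hNdef
    have hsrange : s ⊆ Finset.range N := by
      intro i hi
      rw [Finset.mem_range, hNdef]
      have h' : i ≤ s.sup id := Finset.le_sup (f := id) hi
      omega
    have hsum1 : ∑ i ∈ Finset.range N, (G (i + 1) - G i) = G N - G 0 :=
      Finset.sum_range_sub G N
    have hsum2 : ∑ i ∈ s, (G (i + 1) - G i) = (k : ℝ) * δ := by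
      rw [Finset.sum_congr rfl (fun i hi => hGdelta i (hsub hi))]
      rw [Finset.sum_const, hcard, nsmul_eq_mul]
    have hle : (k : ℝ) * δ ≤ G N - G 0 := by
      rw [← hsum1, ← hsum2]
      exact Finset.sum_le_sum_of_subset_of_nonneg hsrange (fun i _ _ => hGmono i)
    have hub : G N ≤ (1 - q)⁻¹ := gf_le (w N) hq0 hq1
    have hlb : 0 ≤ G 0 := gf_nonneg (w 0) hq0
    linarith
  -- conclude pointwise convergence
  intro t
  obtain ⟨M, hM⟩ := (key t).bddAbove
  refine ⟨M + 1, ?_⟩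
  have hstepeq : ∀ i ≥ M + 1, w (i + 1) t = w i t := by
    intro i hi
    by_cases hps : ps i = 0
    · have hz : ∀ q : ℝ, 0 ≤ q → q < 1 →
          (∑' n : ℕ, (if w (i+1) n then q ^ n else 0)) -
            (∑' n : ℕ, (if w i n then q ^ n else 0)) = 0 := by
        intro q h0' h1'
        rw [hg i q h0' h1', hps]
        simp
      exact eq_of_diff_zero (w (i+1)) (w i) hz t
    · have hnB : i ∉ {j | ps j ≠ 0 ∧ ts j ≤ t} := by
        intro hmem
        have := hM hmem
        omega
      have hts : t < ts i := by
        by_contra hts'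
        exact hnB ⟨hps, Nat.le_of_not_lt hts'⟩
      exact ((hpref i hps).1 t hts).symm
  have hind : ∀ j : ℕ, w (M + 1 + j) t = w (M + 1) t := by
    intro j
    induction j with
    | zero => rfl
    | succ j ih =>
      have := hstepeq (M + 1 + j) (by omega)
      rw [show M + 1 + (j + 1) = (M + 1 + j) + 1 by omega, this, ih]
  intro i hi
  obtain ⟨j, rfl⟩ := Nat.exists_eq_add_of_le hi
  exact hind j
end
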